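/- arXiv:2402.11329 — 7 statements merged into one kernel-verified Lean document; each statement's English description precedes it below -/
import Mathlib

section
/- Let m and k be positive integers with gcd(k, m) = 1, let K = F_{2^m}, let σ : K → K be σ(x) = x^{2^k}, and let α ∈ K be such that the polynomial X^{σ+1} + X + α has no root in K. Then the function F_{α,σ} : K × K → K × K defined by F_{α,σ}(x,y) = (x^{σ+1} + x y^σ + α y^{σ+1}, x^{σ²+1} + α x^{σ²} y + (1+α^σ) x y^{σ²} + α y^{σ²+1}) is APN. -/
/-!
Since `F = F_{α,σ}` is quadratic, `F (z + v) - F z - (F (w + v) - F w) = B (z - w, v)` for the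
polar form `B`, so `F` is APN as soon as `B (u, v) = 0` with `v ≠ 0` forces `u ∈ {0, v}`.

Write `v = (a, b)`, `u = (x, y)` and `P = f (a, b)`, where `f` is the first coordinate of `F`.
Because `X^{σ+1} + X + α` has no root, `f` is anisotropic, so `P ≠ 0` and
`s = a^σ x + b^σ x + α b^σ y`, `t = a y + b x` are coordinates for `u`.
In them the first polar equation becomes `P^σ s + P s^σ + R t^σ = 0`, with `R` depending only
on `a, b`, and eliminating `s` with the second one leaves
`R² t^σ + α (P^σ)² t + α^σ P² t^{σ²} = 0`.
If `t ≠ 0`, choose `ξ` with `ξ² = α t^σ / t`: the relation becomes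
`f (a ξ + α b^σ, a^σ + b ξ + b^σ) = 0`, contradicting anisotropy.
Hence `t = 0`, so `s / P` is fixed by `σ`, i.e. lies in `𝔽₂`, which gives `u = 0` or `u = v`.
-/

/-- A function `F : V → V` on an `𝔽₂`-vector space is almost perfect nonlinear (APN)
if for every `a ≠ 0` and every `b`, the equation `F (x + a) + F x = b` has at most
two solutions. -/
def IsAPN {V : Type*} [AddCommGroup V] (F : V → V) : Prop :=
  ∀ a : V, a ≠ 0 → ∀ b : V, Set.ncard {x : V | F (x + a) + F x = b} ≤ 2

theorem isAPN_of_forall_eq_or_eq_add {V : Type*} [AddCommGroup V] {F : V → V}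
    (h : ∀ a, a ≠ 0 → ∀ z w, F (z + a) + F z = F (w + a) + F w → z = w ∨ z = w + a) :
    IsAPN F := by
  intro a ha b
  rcases Set.eq_empty_or_nonempty {x | F (x + a) + F x = b} with hS | ⟨w, hw⟩
  · simp [hS]
  · calc _ ≤ ({w, w + a} : Set V).ncard :=
          Set.ncard_le_ncard (fun z hz => h a ha z w (hz.trans hw.symm)) (Set.toFinite _)
      _ ≤ 2 := (Set.ncard_insert_le _ _).trans (by simp)

theorem pow_eq_self_of_pow_pow_eq_self {K : Type*} [Field K] [Finite K] {p m k : ℕ}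
    (hp : p ≠ 0) (hcard : Nat.card K = p ^ m) (hkm : k.gcd m = 1) {z : K} (hz : z ^ p ^ k = z) :
    z ^ p = z := by
  have := Fintype.ofFinite K
  rw [Nat.card_eq_fintype_card] at hcard
  rcases eq_or_ne z 0 with rfl | hz0
  · simp [hp]
  have hk : z ^ (p ^ k - 1) = 1 := mul_right_cancel₀ hz0 <| by
    rw [← pow_succ, Nat.sub_one_add_one (pow_ne_zero k hp), hz, one_mul]
  have hm : z ^ (p ^ m - 1) = 1 := hcard ▸ FiniteField.pow_card_sub_one_eq_one z hz0
  have hp1 : z ^ (p - 1) = 1 := by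
    simpa [Nat.pow_sub_one_gcd_pow_sub_one, hkm] using pow_gcd_eq_one.2 ⟨hk, hm⟩
  rw [← Nat.sub_one_add_one hp, pow_succ, hp1, one_mul]

namespace Biprojective

section CommRing

variable {K : Type*} [CommRing K] (σ : K →+* K) (α : K)

def fst (x y : K) : K := σ x * x + x * σ y + α * (σ y * y)

def snd (x y : K) : K :=
  σ (σ x) * x + α * σ (σ x) * y + (1 + σ α) * x * σ (σ y) + α * (σ (σ y) * y)

def map (p : K × K) : K × K := (fst σ α p.1 p.2, snd σ α p.1 p.2)

def polar (u v : K × K) : K × K :=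
  (σ u.1 * v.1 + σ v.1 * u.1 + u.1 * σ v.2 + v.1 * σ u.2 + α * (σ u.2 * v.2 + σ v.2 * u.2),
   σ (σ u.1) * v.1 + σ (σ v.1) * u.1 + α * (σ (σ u.1) * v.2 + σ (σ v.1) * u.2)
     + (1 + σ α) * (u.1 * σ (σ v.2) + v.1 * σ (σ u.2))
     + α * (σ (σ u.2) * v.2 + σ (σ v.2) * u.2))

theorem map_add_sub_map_sub_sub (z w v : K × K) :
    map σ α (z + v) - map σ α z - (map σ α (w + v) - map σ α w) =
      polar σ α (z - w) v := by
  simp only [map, polar, fst, snd, Prod.fst_add, Prod.snd_add, Prod.fst_sub, Prod.snd_sub,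
    map_add, map_sub, Prod.mk_sub_mk]
  congr 1 <;> ring

variable [CharP K 2]

def coordS (a b x y : K) : K := σ a * x + σ b * x + α * σ b * y

def coordT (a b x y : K) : K := a * y + b * x

def coeffR (a b : K) : K :=
  a * σ (σ a) + a * σ (σ b) + σ α * a * σ (σ b) + α * b * σ (σ a) + α * b * σ (σ b)

def coeffN (a b : K) : K :=
  a * σ (σ (σ a)) + a * σ (σ (σ a)) * σ α + a * σ (σ (σ b)) + a * σ (σ (σ b)) * σ α
    + a * σ (σ (σ b)) * σ (σ α) + σ (σ (σ a)) * b * α + b * σ (σ (σ b)) * α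
    + b * σ (σ (σ b)) * α * σ (σ α)

theorem fst_mul_eq_coords_left (a b x y : K) :
    fst σ α a b * x = a * coordS σ α a b x y + α * σ b * coordT a b x y := by
  simp only [fst, coordS, coordT]
  linear_combination (norm := (ring_nf; reduce_mod_char!))

theorem fst_mul_eq_coords_right (a b x y : K) :
    fst σ α a b * y = b * coordS σ α a b x y + (σ a + σ b) * coordT a b x y := by
  simp only [fst, coordS, coordT]
  linear_combination (norm := (ring_nf; reduce_mod_char!))

theorem polar_fst_eq_coords (a b x y : K) :
    σ (fst σ α a b) * (polar σ α (x, y) (a, b)).1 =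
      σ (fst σ α a b) * coordS σ α a b x y + fst σ α a b * σ (coordS σ α a b x y)
        + coeffR σ α a b * σ (coordT a b x y) := by
  simp only [fst, coordS, coordT, coeffR, polar, map_add, map_mul]
  linear_combination (norm := (ring_nf; reduce_mod_char!))

theorem polar_snd_eq_coords (a b x y : K) :
    fst σ α a b * σ (σ (fst σ α a b)) * (polar σ α (x, y) (a, b)).2 =
      σ (σ (fst σ α a b)) * (coeffR σ α a b * coordS σ α a b x y
          + α * σ (fst σ α a b) * coordT a b x y)
        + fst σ α a b * (coeffR σ α a b * σ (σ (coordS σ α a b x y))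
          + coeffN σ α a b * σ (σ (coordT a b x y))) := by
  simp only [fst, coordS, coordT, coeffR, coeffN, polar, map_add, map_mul]
  linear_combination (norm := (ring_nf; reduce_mod_char!))

theorem map_fst_mul_coeffN (a b : K) :
    σ (fst σ α a b) * coeffN σ α a b =
      σ α * fst σ α a b * σ (σ (fst σ α a b))
        + coeffR σ α a b * σ (coeffR σ α a b) := by
  simp only [fst, coeffR, coeffN, map_add, map_mul]
  linear_combination (norm := (ring_nf; reduce_mod_char!))

theorem fst_line_eq (a b ξ : K) :
    fst σ α (a * ξ + α * σ b) (σ a + b * ξ + σ b) =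
      fst σ α a b * σ ξ * ξ + coeffR σ α a b * ξ + α * σ (fst σ α a b) := by
  simp only [fst, coeffR, map_add, map_mul]
  linear_combination (norm := (ring_nf; reduce_mod_char!))

end CommRing

section Field

variable {K : Type*} [Field K] {σ : K →+* K} {α : K}

theorem fst_ne_zero (hα : ∀ x, σ x * x + x + α ≠ 0) {x y : K} (hxy : (x, y) ≠ 0) :
    fst σ α x y ≠ 0 := by
  by_cases hy : y = 0
  · subst hy
    have hx : x ≠ 0 := by simpa using hxy
    simpa [fst] using hx
  · have hσy : σ y ≠ 0 := by simpa using hy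
    have : fst σ α x y = σ y * y * (σ (x / y) * (x / y) + x / y + α) := by
      simp only [fst, map_div₀]
      field_simp
    rw [this]
    exact mul_ne_zero (mul_ne_zero hσy hy) (hα _)

variable [CharP K 2]

theorem coords_relation_of_polar_eq_zero {a b x y : K} (h : polar σ α (x, y) (a, b) = 0) :
    σ (fst σ α a b) * coordS σ α a b x y + fst σ α a b * σ (coordS σ α a b x y)
      + coeffR σ α a b * σ (coordT a b x y) = 0 := by
  rw [← polar_fst_eq_coords, h, Prod.fst_zero, mul_zero]

theorem coordT_relation_of_polar_eq_zero {a b x y : K} (hP : fst σ α a b ≠ 0)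
    (h : polar σ α (x, y) (a, b) = 0) :
    coeffR σ α a b ^ 2 * σ (coordT a b x y) + α * σ (fst σ α a b) ^ 2 * coordT a b x y
      + σ α * fst σ α a b ^ 2 * σ (σ (coordT a b x y)) = 0 := by
  have h1 := coords_relation_of_polar_eq_zero h
  have h1σ := congrArg σ h1
  simp only [map_add, map_mul, map_zero] at h1σ
  have h2 := polar_snd_eq_coords σ α a b x y
  rw [h, Prod.snd_zero, mul_zero] at h2
  have hN := map_fst_mul_coeffN σ α a b
  set P := fst σ α a b
  set s := coordS σ α a b x y
  set t := coordT a b x y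
  set r := coeffR σ α a b
  have hσσP : σ (σ P) ≠ 0 := by simpa using hP
  refine (mul_eq_zero.1 ?_).resolve_left hσσP
  linear_combination (norm := (ring_nf; reduce_mod_char!))
    (σ (σ P) * r) * h1 + (P * r) * h1σ + σ P * h2 + (P * σ (σ t)) * hN

theorem eq_zero_or_eq_of_coordT_eq_zero (hσ : ∀ z, σ z = z → z = 0 ∨ z = 1) {a b x y : K}
    (hP : fst σ α a b ≠ 0) (h : polar σ α (x, y) (a, b) = 0) (ht : coordT a b x y = 0) :
    (x, y) = 0 ∨ (x, y) = (a, b) := by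
  have h1 := coords_relation_of_polar_eq_zero h
  rw [ht, map_zero, mul_zero, add_zero] at h1
  have hfix : σ (coordS σ α a b x y / fst σ α a b) = coordS σ α a b x y / fst σ α a b := by
    rw [map_div₀, div_eq_div_iff (by simpa using hP) hP]
    linear_combination (norm := (ring_nf; reduce_mod_char!)) h1
  obtain ⟨c, hc, hs⟩ : ∃ c, (c = 0 ∨ c = 1) ∧ coordS σ α a b x y = c * fst σ α a b :=
    ⟨_, hσ _ hfix, (div_mul_cancel₀ _ hP).symm⟩
  have hx : x = c * a := mul_left_cancel₀ hP <| by
    rw [fst_mul_eq_coords_left σ α a b x y, ht, hs]; ring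
  have hy : y = c * b := mul_left_cancel₀ hP <| by
    rw [fst_mul_eq_coords_right σ α a b x y, ht, hs]; ring
  rcases hc with rfl | rfl <;> simp [hx, hy]

theorem coordT_eq_zero [PerfectRing K 2] (hα : ∀ x, σ x * x + x + α ≠ 0) {a b x y : K}
    (hab : (a, b) ≠ 0) (h : polar σ α (x, y) (a, b) = 0) : coordT a b x y = 0 := by
  have hP := fst_ne_zero hα hab
  have hkey := coordT_relation_of_polar_eq_zero hP h
  by_contra ht
  have hσt : σ (coordT a b x y) ≠ 0 := by simpa using ht
  obtain ⟨ξ, hξ⟩ := surjective_frobenius K 2 (α * σ (coordT a b x y) / coordT a b x y)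
  rw [frobenius_def] at hξ
  have hξ0 : (a * ξ + α * σ b, σ a + b * ξ + σ b) ≠ 0 := by
    intro h0
    simp only [Prod.mk_eq_zero] at h0
    apply hP
    simp only [fst]
    linear_combination (norm := (ring_nf; reduce_mod_char!)) b * h0.1 + a * h0.2
  have hfst := fst_line_eq σ α a b ξ
  set P := fst σ α a b
  set t := coordT a b x y
  set r := coeffR σ α a b
  have hξt : ξ ^ 2 * t = α * σ t := by rw [hξ, div_mul_cancel₀ _ ht]
  have hσξt : σ ξ ^ 2 * σ t = σ α * σ (σ t) := by simpa using congrArg σ hξt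
  have hsq : fst σ α (a * ξ + α * σ b) (σ a + b * ξ + σ b) ^ 2 * (t * σ t) = 0 := by
    rw [hfst]
    linear_combination (norm := (ring_nf; reduce_mod_char!))
      (P ^ 2 * σ ξ ^ 2 * σ t + r ^ 2 * σ t) * hξt + P ^ 2 * α * σ t * hσξt
        + α * σ t * hkey
  exact fst_ne_zero hα hξ0 (by simpa [ht, hσt] using hsq)

theorem eq_zero_or_eq_of_polar_eq_zero [PerfectRing K 2] (hσ : ∀ z, σ z = z → z = 0 ∨ z = 1)
    (hα : ∀ x, σ x * x + x + α ≠ 0) {u v : K × K} (hv : v ≠ 0) (h : polar σ α u v = 0) :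
    u = 0 ∨ u = v := by
  obtain ⟨x, y⟩ := u
  obtain ⟨a, b⟩ := v
  exact eq_zero_or_eq_of_coordT_eq_zero hσ (fst_ne_zero hα hv) h (coordT_eq_zero hα hv h)

theorem isAPN_map [PerfectRing K 2] (hσ : ∀ z, σ z = z → z = 0 ∨ z = 1)
    (hα : ∀ x, σ x * x + x + α ≠ 0) : IsAPN (map σ α) := by
  refine isAPN_of_forall_eq_or_eq_add fun v hv z w hzw => ?_
  have h : polar σ α (z - w) v = 0 := by
    rw [← map_add_sub_map_sub_sub, CharTwo.sub_eq_add (map σ α (z + v)),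
      CharTwo.sub_eq_add (map σ α (w + v)), hzw, sub_self]
  simpa [sub_eq_zero, sub_eq_iff_eq_add'] using eq_zero_or_eq_of_polar_eq_zero hσ hα hv h

end Field

end Biprojective

theorem stmt_2_general (m k : ℕ) (hm : 0 < m) (h : Nat.gcd k m = 1)
    (α : GaloisField 2 m)
    (hα : ∀ x : GaloisField 2 m, x ^ (2 ^ k + 1) + x + α ≠ 0) :
    IsAPN (fun p : GaloisField 2 m × GaloisField 2 m =>
      (p.1 ^ (2 ^ k + 1) + p.1 * p.2 ^ (2 ^ k) + α * p.2 ^ (2 ^ k + 1),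
       p.1 ^ (2 ^ (2 * k) + 1) + α * p.1 ^ (2 ^ (2 * k)) * p.2
         + (1 + α ^ (2 ^ k)) * p.1 * p.2 ^ (2 ^ (2 * k))
         + α * p.2 ^ (2 ^ (2 * k) + 1))) := by
  set σ := iterateFrobenius (GaloisField 2 m) 2 k
  have hσx (x) : σ x = x ^ 2 ^ k := iterateFrobenius_def 2 k x
  have hσσx (x) : σ (σ x) = x ^ 2 ^ (2 * k) := by
    rw [hσx, hσx, ← pow_mul, ← pow_add, two_mul]
  have hfix (z) (hz : σ z = z) : z = 0 ∨ z = 1 := eq_zero_or_one_of_sq_eq_self <|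
    pow_eq_self_of_pow_pow_eq_self two_ne_zero (GaloisField.card 2 m hm.ne') h (hσx z ▸ hz)
  have hroot (x) : σ x * x + x + α ≠ 0 := by simpa [hσx, pow_succ] using hα x
  convert Biprojective.isAPN_map hfix hroot using 1
  funext p
  simp only [Biprojective.map, Biprojective.fst, Biprojective.snd, hσσx]
  simp only [hσx, pow_succ]

/-- The extended biprojective family: for `gcd(k, m) = 1`, `σ : x ↦ x^(2^k)` and
`α ∈ 𝔽_{2^m}` such that `X^(σ+1) + X + α` has no root in `𝔽_{2^m}`, the function
`F(x,y) = (x^(σ+1) + x y^σ + α y^(σ+1),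
           x^(σ²+1) + α x^(σ²) y + (1+α^σ) x y^(σ²) + α y^(σ²+1))` is APN. -/
theorem stmt_2 (m k : ℕ) (hm : 0 < m) (hk : 0 < k) (h : Nat.gcd k m = 1)
    (α : GaloisField 2 m)
    (hα : ∀ x : GaloisField 2 m, x ^ (2 ^ k + 1) + x + α ≠ 0) :
    IsAPN (fun p : GaloisField 2 m × GaloisField 2 m =>
      (p.1 ^ (2 ^ k + 1) + p.1 * p.2 ^ (2 ^ k) + α * p.2 ^ (2 ^ k + 1),
       p.1 ^ (2 ^ (2 * k) + 1) + α * p.1 ^ (2 ^ (2 * k)) * p.2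
         + (1 + α ^ (2 ^ k)) * p.1 * p.2 ^ (2 ^ (2 * k))
         + α * p.2 ^ (2 ^ (2 * k) + 1))) :=
  stmt_2_general m k hm h α hα
end

section
/- Let K = F_{2^m}, σ(x) = x^{2^k} with gcd(k,m) = 1, and α₁, α₂ ∈ K. For α ∈ K put f_α(x,y) = x^{σ+1} + x y^σ + α y^{σ+1} and g_α(x,y) = x^{σ²+1} + α x^{σ²} y + (1+α^σ) x y^{σ²} + α y^{σ²+1}. Suppose a ∈ K* and c₁, c₂, c₃, c₄ ∈ K with c₁c₄ + c₂c₃ ≠ 0 satisfy a · f_{α₁}(c₁x + c₂y, c₃x + c₄y) = f_{α₂}(x,y) for all x, y ∈ K. Then there exists a unique a' ∈ K* such that a' · g_{α₁}(c₁x + c₂y, c₃x + c₄y) = g_{α₂}(x,y) for all x, y ∈ K. -/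
/-- The biprojective polynomial `f_α(x,y) = x^(σ+1) + x y^σ + α y^(σ+1)`,
where `σ : x ↦ x^(2^k)`. -/
noncomputable def fpoly {m : ℕ} (k : ℕ) (α x y : GaloisField 2 m) : GaloisField 2 m :=
  x ^ (2 ^ k + 1) + x * y ^ (2 ^ k) + α * y ^ (2 ^ k + 1)

/-- The biprojective polynomial
`g_α(x,y) = x^(σ²+1) + α x^(σ²) y + (1+α^σ) x y^(σ²) + α y^(σ²+1)`,
where `σ : x ↦ x^(2^k)`. -/
noncomputable def gpoly {m : ℕ} (k : ℕ) (α x y : GaloisField 2 m) : GaloisField 2 m :=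
  x ^ (2 ^ (2 * k) + 1) + α * x ^ (2 ^ (2 * k)) * y
    + (1 + α ^ (2 ^ k)) * x * y ^ (2 ^ (2 * k)) + α * y ^ (2 ^ (2 * k) + 1)

set_option maxHeartbeats 2000000 in
/-- If `(a, M)` moves `f_{α₁}` to `f_{α₂}`, then there is a unique `a' ∈ K*` such
that `(a', M)` moves `g_{α₁}` to `g_{α₂}`. -/
theorem stmt_4 (m k : ℕ) (hm : 0 < m) (hk : 0 < k) (hkm : Nat.gcd k m = 1)
    (α₁ α₂ : GaloisField 2 m) (a c₁ c₂ c₃ c₄ : GaloisField 2 m)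
    (ha : a ≠ 0) (hdet : c₁ * c₄ + c₂ * c₃ ≠ 0)
    (hf : ∀ x y : GaloisField 2 m,
      a * fpoly k α₁ (c₁ * x + c₂ * y) (c₃ * x + c₄ * y) = fpoly k α₂ x y) :
    ∃! a' : GaloisField 2 m, a' ≠ 0 ∧ ∀ x y : GaloisField 2 m,
      a' * gpoly k α₁ (c₁ * x + c₂ * y) (c₃ * x + c₄ * y) = gpoly k α₂ x y := by
  have htwo : (2 : GaloisField 2 m) = 0 := by
    have := CharP.cast_eq_zero (GaloisField 2 m) 2
    exact_mod_cast this
  have hqne : (2 : ℕ) ^ k ≠ 0 := (pow_pos (by norm_num : (0:ℕ) < 2) k).ne'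
  have hQne : (2 : ℕ) ^ (2 * k) ≠ 0 := (pow_pos (by norm_num : (0:ℕ) < 2) (2*k)).ne'
  have haddq : ∀ u v : GaloisField 2 m, (u + v) ^ 2 ^ k = u ^ 2 ^ k + v ^ 2 ^ k :=
    fun u v => add_pow_char_pow u v 2 k
  have haddQ : ∀ u v : GaloisField 2 m, (u + v) ^ 2 ^ (2 * k) = u ^ 2 ^ (2 * k) + v ^ 2 ^ (2 * k) :=
    fun u v => add_pow_char_pow u v 2 (2 * k)
  have hpow : ∀ z : GaloisField 2 m, (z ^ 2 ^ k) ^ 2 ^ k = z ^ 2 ^ (2 * k) := by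
    intro z; rw [← pow_mul, ← pow_add, two_mul]
  have hex : ∃ a' : GaloisField 2 m, a' ≠ 0 ∧ ∀ x y : GaloisField 2 m,
      a' * gpoly k α₁ (c₁ * x + c₂ * y) (c₃ * x + c₄ * y) = gpoly k α₂ x y := by
    by_cases hdeg : ∀ t : GaloisField 2 m, t ^ 2 ^ k = t
    · have hdeg2 : ∀ t : GaloisField 2 m, t ^ 2 ^ (2 * k) = t := fun t => by
        rw [← hpow, hdeg, hdeg]
      have hgf : ∀ β u v : GaloisField 2 m, gpoly k β u v = fpoly k β u v := by
        intro β u v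
        simp only [gpoly, fpoly, pow_succ, hdeg, hdeg2]
        linear_combination (β * u * v) * htwo
      exact ⟨a, ha, fun x y => by rw [hgf, hgf]; exact hf x y⟩
    · push_neg at hdeg
      obtain ⟨t₀, ht₀⟩ := hdeg
      have hA : a * (c₁ ^ 2 ^ k * c₁ + c₁ * c₃ ^ 2 ^ k + α₁ * (c₃ ^ 2 ^ k * c₃)) = 1 := by
        have h := hf 1 0
        simp only [mul_one, mul_zero, add_zero] at h
        simp only [fpoly, pow_succ, one_pow, mul_one, zero_pow hqne, mul_zero, add_zero] at h
        linear_combination h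
      have hD : a * (c₂ ^ 2 ^ k * c₂ + c₂ * c₄ ^ 2 ^ k + α₁ * (c₄ ^ 2 ^ k * c₄)) = α₂ := by
        have h := hf 0 1
        simp only [mul_one, mul_zero, zero_add] at h
        simp only [fpoly, pow_succ, one_pow, mul_one, zero_pow hqne, mul_zero, zero_mul,
          zero_add, add_zero] at h
        linear_combination h
      have heq : ∀ t : GaloisField 2 m,
          a * ((c₁ ^ 2 ^ k * c₁ + c₁ * c₃ ^ 2 ^ k + α₁ * (c₃ ^ 2 ^ k * c₃)) * (t ^ 2 ^ k * t)
            + (c₂ * c₁ ^ 2 ^ k + c₂ * c₃ ^ 2 ^ k + α₁ * (c₄ * c₃ ^ 2 ^ k)) * t ^ 2 ^ k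
            + (c₁ * c₂ ^ 2 ^ k + c₁ * c₄ ^ 2 ^ k + α₁ * (c₃ * c₄ ^ 2 ^ k)) * t
            + (c₂ ^ 2 ^ k * c₂ + c₂ * c₄ ^ 2 ^ k + α₁ * (c₄ ^ 2 ^ k * c₄)))
          = t ^ 2 ^ k * t + t + α₂ := by
        intro t
        have h := hf t 1
        simp only [mul_one] at h
        have e1 : (c₁ * t + c₂) ^ 2 ^ k = c₁ ^ 2 ^ k * t ^ 2 ^ k + c₂ ^ 2 ^ k := by
          rw [haddq, mul_pow]
        have e2 : (c₃ * t + c₄) ^ 2 ^ k = c₃ ^ 2 ^ k * t ^ 2 ^ k + c₄ ^ 2 ^ k := by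
          rw [haddq, mul_pow]
        simp only [fpoly, pow_succ, e1, e2, one_pow, mul_one] at h
        linear_combination h
      have hBC : a * (c₂ * c₁ ^ 2 ^ k + c₂ * c₃ ^ 2 ^ k + α₁ * (c₄ * c₃ ^ 2 ^ k))
          + a * (c₁ * c₂ ^ 2 ^ k + c₁ * c₄ ^ 2 ^ k + α₁ * (c₃ * c₄ ^ 2 ^ k)) = 1 := by
        have h := heq 1
        simp only [one_pow, mul_one] at h
        linear_combination h - hA - hD
      have hBt : a * (c₂ * c₁ ^ 2 ^ k + c₂ * c₃ ^ 2 ^ k + α₁ * (c₄ * c₃ ^ 2 ^ k))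
          * (t₀ ^ 2 ^ k - t₀) = 0 := by
        linear_combination heq t₀ - (t₀ ^ 2 ^ k * t₀) * hA - hD - t₀ * hBC
      have hB : c₂ * c₁ ^ 2 ^ k + c₂ * c₃ ^ 2 ^ k + α₁ * (c₄ * c₃ ^ 2 ^ k) = 0 := by
        have h3 : a * (c₂ * c₁ ^ 2 ^ k + c₂ * c₃ ^ 2 ^ k + α₁ * (c₄ * c₃ ^ 2 ^ k)) = 0 :=
          (mul_eq_zero.mp hBt).resolve_right (sub_ne_zero.mpr ht₀)
        exact (mul_eq_zero.mp h3).resolve_left ha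
      have hC : a * (c₁ * c₂ ^ 2 ^ k + c₁ * c₄ ^ 2 ^ k + α₁ * (c₃ * c₄ ^ 2 ^ k)) = 1 := by
        linear_combination hBC - a * hB
      have hAs : a ^ 2 ^ k * (c₁ ^ 2 ^ (2 * k) * c₁ ^ 2 ^ k + c₁ ^ 2 ^ k * c₃ ^ 2 ^ (2 * k)
          + α₁ ^ 2 ^ k * (c₃ ^ 2 ^ (2 * k) * c₃ ^ 2 ^ k)) = 1 := by
        have h := congrArg (fun z : GaloisField 2 m => z ^ 2 ^ k) hA
        simp only [mul_pow, haddq, hpow, one_pow] at h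
        linear_combination h
      have hBs : c₂ ^ 2 ^ k * c₁ ^ 2 ^ (2 * k) + c₂ ^ 2 ^ k * c₃ ^ 2 ^ (2 * k)
          + α₁ ^ 2 ^ k * (c₄ ^ 2 ^ k * c₃ ^ 2 ^ (2 * k)) = 0 := by
        have h := congrArg (fun z : GaloisField 2 m => z ^ 2 ^ k) hB
        simp only [mul_pow, haddq, hpow, zero_pow hqne] at h
        linear_combination h
      have hCs : a ^ 2 ^ k * (c₁ ^ 2 ^ k * c₂ ^ 2 ^ (2 * k) + c₁ ^ 2 ^ k * c₄ ^ 2 ^ (2 * k)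
          + α₁ ^ 2 ^ k * (c₃ ^ 2 ^ k * c₄ ^ 2 ^ (2 * k))) = 1 := by
        have h := congrArg (fun z : GaloisField 2 m => z ^ 2 ^ k) hC
        simp only [mul_pow, haddq, hpow, one_pow] at h
        linear_combination h
      have hDs : a ^ 2 ^ k * (c₂ ^ 2 ^ (2 * k) * c₂ ^ 2 ^ k + c₂ ^ 2 ^ k * c₄ ^ 2 ^ (2 * k)
          + α₁ ^ 2 ^ k * (c₄ ^ 2 ^ (2 * k) * c₄ ^ 2 ^ k)) = α₂ ^ 2 ^ k := by
        have h := congrArg (fun z : GaloisField 2 m => z ^ 2 ^ k) hD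
        simp only [mul_pow, haddq, hpow] at h
        linear_combination h
      have hT1 : a ^ 2 ^ k * a * (c₁ ^ 2 ^ k * c₄ ^ 2 ^ k + c₂ ^ 2 ^ k * c₃ ^ 2 ^ k)
          * (c₁ ^ 2 ^ (2 * k) * c₁ + α₁ * (c₁ ^ 2 ^ (2 * k) * c₃) + c₁ * c₃ ^ 2 ^ (2 * k)
            + α₁ ^ 2 ^ k * (c₁ * c₃ ^ 2 ^ (2 * k)) + α₁ * (c₃ ^ 2 ^ (2 * k) * c₃)) = 1 := by
        linear_combination ((c₄ ^ 2 ^ k) * (c₃ ^ 2 ^ (2 * k)) * (α₁ ^ 2 ^ k) * (a ^ 2 ^ k) + 2 * (c₃ ^ 2 ^ k) * (c₃ ^ 2 ^ (2 * k)) * (α₁ ^ 2 ^ k) * (a ^ 2 ^ k) + (c₂ ^ 2 ^ k) * (c₃ ^ 2 ^ (2 * k)) * (a ^ 2 ^ k) + (c₂ ^ 2 ^ k) * (c₁ ^ 2 ^ (2 * k)) * (a ^ 2 ^ k) + 2 * (c₁ ^ 2 ^ k) * (c₃ ^ 2 ^ (2 * k)) * (a ^ 2 ^ k) + 2 * (c₁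 ^ 2 ^ k) * (c₁ ^ 2 ^ (2 * k)) * (a ^ 2 ^ k)) * hA + ((c₄ ^ 2 ^ k) * (c₃ ^ 2 ^ (2 * k)) * (α₁ ^ 2 ^ k) * (a ^ 2 ^ k) + (c₃ ^ 2 ^ k) * (c₃ ^ 2 ^ (2 * k)) * (α₁ ^ 2 ^ k) * (a ^ 2 ^ k) + (c₂ ^ 2 ^ k) * (c₃ ^ 2 ^ (2 * k)) * (a ^ 2 ^ k) + (c₂ ^ 2 ^ k) * (c₁ ^ 2 ^ (2 * k)) * (a ^ 2 ^ k) + (c₁ ^ 2 ^ k) * (c₃ ^ 2 ^ (2 * k)) * (a ^ 2 ^ k) + (c₁ ^ 2 ^ k) * (c₁ ^ 2 ^ (2 * k)) * (a ^ 2 ^ k)) * hC + (1) * hAs + (c₃ * (c₄ ^ 2 ^ k) * α₁ * a * (a ^ 2 ^ k) + c₁ * (c₄ ^ 2 ^ k) * a * (a ^ 2 ^ k) + c₁ * (c₂ ^ 2 ^ k) * a * (a ^ 2 ^ k)) * hBs + ((c₄ ^ 2 ^ k) * (c₃ ^ 2 ^ (2 * k)) * (α₁ ^ 2 ^ k) *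 (a ^ 2 ^ k) + (c₃ ^ 2 ^ k) * (c₃ ^ 2 ^ (2 * k)) * (α₁ ^ 2 ^ k) * (a ^ 2 ^ k) + (c₂ ^ 2 ^ k) * (c₃ ^ 2 ^ (2 * k)) * (a ^ 2 ^ k) + (c₂ ^ 2 ^ k) * (c₁ ^ 2 ^ (2 * k)) * (a ^ 2 ^ k) + (c₁ ^ 2 ^ k) * (c₃ ^ 2 ^ (2 * k)) * (a ^ 2 ^ k) + (c₁ ^ 2 ^ k) * (c₁ ^ 2 ^ (2 * k)) * (a ^ 2 ^ k) - c₃ * (c₄ ^ 2 ^ k) ^ 2 * (c₃ ^ 2 ^ (2 * k)) * α₁ * (α₁ ^ 2 ^ k) * a * (a ^ 2 ^ k) - c₃ * (c₃ ^ 2 ^ k) * (c₄ ^ 2 ^ k) * (c₃ ^ 2 ^ (2 * k)) * α₁ * (α₁ ^ 2 ^ k) * a * (a ^ 2 ^ k) - c₃ * (c₃ ^ 2 ^ k) ^ 2 * (c₃ ^ 2 ^ (2 * k)) * α₁ * (α₁ ^ 2 ^ k) * a * (a ^ 2 ^ k) - c₃ * (c₂ ^ 2 ^ k) * (c₄ ^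 2 ^ k) * (c₃ ^ 2 ^ (2 * k)) * α₁ * a * (a ^ 2 ^ k) - c₃ * (c₂ ^ 2 ^ k) * (c₄ ^ 2 ^ k) * (c₁ ^ 2 ^ (2 * k)) * α₁ * a * (a ^ 2 ^ k) - c₃ * (c₁ ^ 2 ^ k) * (c₃ ^ 2 ^ k) * (c₃ ^ 2 ^ (2 * k)) * α₁ * a * (a ^ 2 ^ k) - c₃ * (c₁ ^ 2 ^ k) * (c₃ ^ 2 ^ k) * (c₁ ^ 2 ^ (2 * k)) * α₁ * a * (a ^ 2 ^ k) - c₁ * (c₄ ^ 2 ^ k) ^ 2 * (c₃ ^ 2 ^ (2 * k)) * (α₁ ^ 2 ^ k) * a * (a ^ 2 ^ k) - c₁ * (c₃ ^ 2 ^ k) * (c₄ ^ 2 ^ k) * (c₃ ^ 2 ^ (2 * k)) * (α₁ ^ 2 ^ k) * a * (a ^ 2 ^ k) - c₁ * (c₃ ^ 2 ^ k) ^ 2 * (c₃ ^ 2 ^ (2 * k)) * (α₁ ^ 2 ^ k) * a * (a ^ 2 ^ k) - c₁ * (c₂ ^ 2 ^ k) * (c₄ ^ 2 ^ k) * (c₃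 ^ 2 ^ (2 * k)) * a * (a ^ 2 ^ k) - c₁ * (c₂ ^ 2 ^ k) * (c₄ ^ 2 ^ k) * (c₃ ^ 2 ^ (2 * k)) * (α₁ ^ 2 ^ k) * a * (a ^ 2 ^ k) - c₁ * (c₂ ^ 2 ^ k) * (c₄ ^ 2 ^ k) * (c₁ ^ 2 ^ (2 * k)) * a * (a ^ 2 ^ k) - c₁ * (c₂ ^ 2 ^ k) ^ 2 * (c₃ ^ 2 ^ (2 * k)) * a * (a ^ 2 ^ k) - c₁ * (c₂ ^ 2 ^ k) ^ 2 * (c₁ ^ 2 ^ (2 * k)) * a * (a ^ 2 ^ k) - c₁ * (c₁ ^ 2 ^ k) * (c₃ ^ 2 ^ k) * (c₃ ^ 2 ^ (2 * k)) * a * (a ^ 2 ^ k) - c₁ * (c₁ ^ 2 ^ k) * (c₃ ^ 2 ^ k) * (c₃ ^ 2 ^ (2 * k)) * (α₁ ^ 2 ^ k) * a * (a ^ 2 ^ k) - c₁ * (c₁ ^ 2 ^ k) * (c₃ ^ 2 ^ k) * (c₁ ^ 2 ^ (2 * k)) * a * (a ^ 2 ^ k) - c₁ * (c₁ ^ 2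 ^ k) * (c₂ ^ 2 ^ k) * (c₃ ^ 2 ^ (2 * k)) * a * (a ^ 2 ^ k) - c₁ * (c₁ ^ 2 ^ k) * (c₂ ^ 2 ^ k) * (c₁ ^ 2 ^ (2 * k)) * a * (a ^ 2 ^ k) - c₁ * (c₁ ^ 2 ^ k) ^ 2 * (c₃ ^ 2 ^ (2 * k)) * a * (a ^ 2 ^ k) - c₁ * (c₁ ^ 2 ^ k) ^ 2 * (c₁ ^ 2 ^ (2 * k)) * a * (a ^ 2 ^ k)) * htwo
      have hT2 : a ^ 2 ^ k * a * (c₁ ^ 2 ^ k * c₄ ^ 2 ^ k + c₂ ^ 2 ^ k * c₃ ^ 2 ^ k)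
          * (c₁ ^ 2 ^ (2 * k) * c₂ + α₁ * (c₁ ^ 2 ^ (2 * k) * c₄) + c₂ * c₃ ^ 2 ^ (2 * k)
            + α₁ ^ 2 ^ k * (c₂ * c₃ ^ 2 ^ (2 * k)) + α₁ * (c₃ ^ 2 ^ (2 * k) * c₄)) = α₂ := by
        linear_combination ((c₄ ^ 2 ^ k) * (c₃ ^ 2 ^ (2 * k)) * (α₁ ^ 2 ^ k) * a * (a ^ 2 ^ k) + (c₂ ^ 2 ^ k) * (c₃ ^ 2 ^ (2 * k)) * a * (a ^ 2 ^ k) + (c₂ ^ 2 ^ k) * (c₁ ^ 2 ^ (2 * k)) * a * (a ^ 2 ^ k)) * hB + ((c₃ ^ 2 ^ k) * (c₃ ^ 2 ^ (2 * k)) * (α₁ ^ 2 ^ k) * (a ^ 2 ^ k) + (c₁ ^ 2 ^ k) * (c₃ ^ 2 ^ (2 * k)) * (a ^ 2 ^ k) + (c₁ ^ 2 ^ k) * (c₁ ^ 2 ^ (2 * k)) * (a ^ 2 ^ k)) * hD + (α₂) * hAs + (-c₄ * (c₃ ^ 2 ^ k) * (c₄ ^ 2 ^ k) * (c₃ ^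 2 ^ (2 * k)) * α₁ * (α₁ ^ 2 ^ k) * a * (a ^ 2 ^ k) - c₂ * (c₃ ^ 2 ^ k) * (c₄ ^ 2 ^ k) * (c₃ ^ 2 ^ (2 * k)) * (α₁ ^ 2 ^ k) * a * (a ^ 2 ^ k) - c₂ * (c₁ ^ 2 ^ k) * (c₂ ^ 2 ^ k) * (c₃ ^ 2 ^ (2 * k)) * a * (a ^ 2 ^ k) - c₂ * (c₁ ^ 2 ^ k) * (c₂ ^ 2 ^ k) * (c₁ ^ 2 ^ (2 * k)) * a * (a ^ 2 ^ k)) * htwo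
      have hT3 : a ^ 2 ^ k * a * (c₁ ^ 2 ^ k * c₄ ^ 2 ^ k + c₂ ^ 2 ^ k * c₃ ^ 2 ^ k)
          * (c₂ ^ 2 ^ (2 * k) * c₁ + α₁ * (c₂ ^ 2 ^ (2 * k) * c₃) + c₁ * c₄ ^ 2 ^ (2 * k)
            + α₁ ^ 2 ^ k * (c₁ * c₄ ^ 2 ^ (2 * k)) + α₁ * (c₃ * c₄ ^ 2 ^ (2 * k)))
          = 1 + α₂ ^ 2 ^ k := by
        linear_combination ((c₄ ^ 2 ^ k) * (c₄ ^ 2 ^ (2 * k)) * (α₁ ^ 2 ^ k) * (a ^ 2 ^ k) + 2 * (c₃ ^ 2 ^ k) * (c₃ ^ 2 ^ (2 * k)) * (α₁ ^ 2 ^ k) * (a ^ 2 ^ k) + (c₂ ^ 2 ^ k) * (c₄ ^ 2 ^ (2 * k)) * (a ^ 2 ^ k) + (c₂ ^ 2 ^ k) * (c₂ ^ 2 ^ (2 * k)) * (a ^ 2 ^ k) + 2 * (c₁ ^ 2 ^ k) * (c₃ ^ 2 ^ (2 * k)) * (a ^ 2 ^ k) + 2 * (c₁ ^ 2 ^ k)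 * (c₁ ^ 2 ^ (2 * k)) * (a ^ 2 ^ k)) * hA + ((c₃ ^ 2 ^ k) * (c₃ ^ 2 ^ (2 * k)) * (α₁ ^ 2 ^ k) * (a ^ 2 ^ k) + (c₁ ^ 2 ^ k) * (c₃ ^ 2 ^ (2 * k)) * (a ^ 2 ^ k) + (c₁ ^ 2 ^ k) * (c₁ ^ 2 ^ (2 * k)) * (a ^ 2 ^ k)) * hC + (1 + c₃ * (c₄ ^ 2 ^ k) * α₁ * a + c₁ * (c₄ ^ 2 ^ k) * a + c₁ * (c₂ ^ 2 ^ k) * a) * hAs + (c₃ * (c₄ ^ 2 ^ k) * α₁ * a + c₁ * (c₄ ^ 2 ^ k) * a + c₁ * (c₂ ^ 2 ^ k) * a) * hCs + (1) * hDs + ((c₃ ^ 2 ^ k) * (c₃ ^ 2 ^ (2 * k)) * (α₁ ^ 2 ^ k) * (a ^ 2 ^ k) + (c₁ ^ 2 ^ k) * (c₃ ^ 2 ^ (2 * k)) * (a ^ 2 ^ k) + (c₁ ^ 2 ^ k) * (c₁ ^ 2 ^ (2 * k)) * (a ^ 2 ^ k) + c₃ * (c₄ ^ 2 ^ k) * α₁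 * a - c₃ * (c₃ ^ 2 ^ k) * (c₄ ^ 2 ^ k) * (c₄ ^ 2 ^ (2 * k)) * α₁ * (α₁ ^ 2 ^ k) * a * (a ^ 2 ^ k) - c₃ * (c₃ ^ 2 ^ k) * (c₄ ^ 2 ^ k) * (c₃ ^ 2 ^ (2 * k)) * α₁ * (α₁ ^ 2 ^ k) * a * (a ^ 2 ^ k) - c₃ * (c₃ ^ 2 ^ k) ^ 2 * (c₃ ^ 2 ^ (2 * k)) * α₁ * (α₁ ^ 2 ^ k) * a * (a ^ 2 ^ k) - c₃ * (c₁ ^ 2 ^ k) * (c₄ ^ 2 ^ k) * (c₃ ^ 2 ^ (2 * k)) * α₁ * a * (a ^ 2 ^ k) - c₃ * (c₁ ^ 2 ^ k) * (c₄ ^ 2 ^ k) * (c₁ ^ 2 ^ (2 * k)) * α₁ * a * (a ^ 2 ^ k) - c₃ * (c₁ ^ 2 ^ k) * (c₃ ^ 2 ^ k) * (c₃ ^ 2 ^ (2 * k)) * α₁ * a * (a ^ 2 ^ k) - c₃ * (c₁ ^ 2 ^ k) * (c₃ ^ 2 ^ k) * (c₁ ^ 2 ^ (2 * k)) * α₁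 * a * (a ^ 2 ^ k) + c₁ * (c₄ ^ 2 ^ k) * a - c₁ * (c₃ ^ 2 ^ k) * (c₄ ^ 2 ^ k) * (c₄ ^ 2 ^ (2 * k)) * (α₁ ^ 2 ^ k) * a * (a ^ 2 ^ k) - c₁ * (c₃ ^ 2 ^ k) * (c₄ ^ 2 ^ k) * (c₃ ^ 2 ^ (2 * k)) * (α₁ ^ 2 ^ k) * a * (a ^ 2 ^ k) - c₁ * (c₃ ^ 2 ^ k) ^ 2 * (c₃ ^ 2 ^ (2 * k)) * (α₁ ^ 2 ^ k) * a * (a ^ 2 ^ k) + c₁ * (c₂ ^ 2 ^ k) * a - c₁ * (c₂ ^ 2 ^ k) * (c₃ ^ 2 ^ k) * (c₃ ^ 2 ^ (2 * k)) * (α₁ ^ 2 ^ k) * a * (a ^ 2 ^ k) - c₁ * (c₁ ^ 2 ^ k) * (c₄ ^ 2 ^ k) * (c₃ ^ 2 ^ (2 * k)) * a * (a ^ 2 ^ k) - c₁ * (c₁ ^ 2 ^ k) * (c₄ ^ 2 ^ k) * (c₁ ^ 2 ^ (2 * k)) * a * (a ^ 2 ^ k) - c₁ * (c₁ ^ 2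 ^ k) * (c₃ ^ 2 ^ k) * (c₃ ^ 2 ^ (2 * k)) * a * (a ^ 2 ^ k) - c₁ * (c₁ ^ 2 ^ k) * (c₃ ^ 2 ^ k) * (c₃ ^ 2 ^ (2 * k)) * (α₁ ^ 2 ^ k) * a * (a ^ 2 ^ k) - c₁ * (c₁ ^ 2 ^ k) * (c₃ ^ 2 ^ k) * (c₁ ^ 2 ^ (2 * k)) * a * (a ^ 2 ^ k) - c₁ * (c₁ ^ 2 ^ k) * (c₂ ^ 2 ^ k) * (c₄ ^ 2 ^ (2 * k)) * a * (a ^ 2 ^ k) - c₁ * (c₁ ^ 2 ^ k) * (c₂ ^ 2 ^ k) * (c₃ ^ 2 ^ (2 * k)) * a * (a ^ 2 ^ k) - c₁ * (c₁ ^ 2 ^ k) * (c₂ ^ 2 ^ k) * (c₂ ^ 2 ^ (2 * k)) * a * (a ^ 2 ^ k) - c₁ * (c₁ ^ 2 ^ k) * (c₂ ^ 2 ^ k) * (c₁ ^ 2 ^ (2 * k)) * a * (a ^ 2 ^ k) - c₁ * (c₁ ^ 2 ^ k) ^ 2 * (c₃ ^ 2 ^ (2 * k)) * a * (a ^ 2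 ^ k) - c₁ * (c₁ ^ 2 ^ k) ^ 2 * (c₁ ^ 2 ^ (2 * k)) * a * (a ^ 2 ^ k)) * htwo
      have hT4 : a ^ 2 ^ k * a * (c₁ ^ 2 ^ k * c₄ ^ 2 ^ k + c₂ ^ 2 ^ k * c₃ ^ 2 ^ k)
          * (c₂ ^ 2 ^ (2 * k) * c₂ + α₁ * (c₂ ^ 2 ^ (2 * k) * c₄) + c₂ * c₄ ^ 2 ^ (2 * k)
            + α₁ ^ 2 ^ k * (c₂ * c₄ ^ 2 ^ (2 * k)) + α₁ * (c₄ ^ 2 ^ (2 * k) * c₄)) = α₂ := by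
        linear_combination ((c₄ ^ 2 ^ k) * (c₄ ^ 2 ^ (2 * k)) * (α₁ ^ 2 ^ k) * a * (a ^ 2 ^ k) + (c₂ ^ 2 ^ k) * (c₄ ^ 2 ^ (2 * k)) * a * (a ^ 2 ^ k) + (c₂ ^ 2 ^ k) * (c₂ ^ 2 ^ (2 * k)) * a * (a ^ 2 ^ k)) * hB + ((c₃ ^ 2 ^ k) * (c₃ ^ 2 ^ (2 * k)) * (α₁ ^ 2 ^ k) * (a ^ 2 ^ k) + (c₁ ^ 2 ^ k) * (c₃ ^ 2 ^ (2 * k)) * (a ^ 2 ^ k) + (c₁ ^ 2 ^ k) * (c₁ ^ 2 ^ (2 * k)) * (a ^ 2 ^ k)) * hD + (α₂ + c₄ * (c₄ ^ 2 ^ k) * α₁ * a + c₂ * (c₄ ^ 2 ^ k) * a + c₂ * (c₂ ^ 2 ^ k) * a) * hAs + (c₄ * (c₄ ^ 2 ^ k) * α₁ * a + c₂ * (c₄ ^ 2 ^ k) * a + c₂ * (c₂ ^ 2 ^ k) * a) * hCs + (c₄ * (c₄ ^ 2 ^ k) * α₁ * a - c₄ * (c₃ ^ 2 ^ k) * (c₄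 ^ 2 ^ k) * (c₄ ^ 2 ^ (2 * k)) * α₁ * (α₁ ^ 2 ^ k) * a * (a ^ 2 ^ k) - c₄ * (c₃ ^ 2 ^ k) * (c₄ ^ 2 ^ k) * (c₃ ^ 2 ^ (2 * k)) * α₁ * (α₁ ^ 2 ^ k) * a * (a ^ 2 ^ k) - c₄ * (c₁ ^ 2 ^ k) * (c₄ ^ 2 ^ k) * (c₃ ^ 2 ^ (2 * k)) * α₁ * a * (a ^ 2 ^ k) - c₄ * (c₁ ^ 2 ^ k) * (c₄ ^ 2 ^ k) * (c₁ ^ 2 ^ (2 * k)) * α₁ * a * (a ^ 2 ^ k) + c₂ * (c₄ ^ 2 ^ k) * a - c₂ * (c₃ ^ 2 ^ k) * (c₄ ^ 2 ^ k) * (c₄ ^ 2 ^ (2 * k)) * (α₁ ^ 2 ^ k) * a * (a ^ 2 ^ k) - c₂ * (c₃ ^ 2 ^ k) * (c₄ ^ 2 ^ k) * (c₃ ^ 2 ^ (2 * k)) * (α₁ ^ 2 ^ k) * a * (a ^ 2 ^ k) + c₂ * (c₂ ^ 2 ^ k) * a - c₂ * (c₂ ^ 2 ^ k) * (c₃ ^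 2 ^ k) * (c₃ ^ 2 ^ (2 * k)) * (α₁ ^ 2 ^ k) * a * (a ^ 2 ^ k) - c₂ * (c₁ ^ 2 ^ k) * (c₄ ^ 2 ^ k) * (c₃ ^ 2 ^ (2 * k)) * a * (a ^ 2 ^ k) - c₂ * (c₁ ^ 2 ^ k) * (c₄ ^ 2 ^ k) * (c₁ ^ 2 ^ (2 * k)) * a * (a ^ 2 ^ k) - c₂ * (c₁ ^ 2 ^ k) * (c₂ ^ 2 ^ k) * (c₄ ^ 2 ^ (2 * k)) * a * (a ^ 2 ^ k) - c₂ * (c₁ ^ 2 ^ k) * (c₂ ^ 2 ^ k) * (c₃ ^ 2 ^ (2 * k)) * a * (a ^ 2 ^ k) - c₂ * (c₁ ^ 2 ^ k) * (c₂ ^ 2 ^ k) * (c₂ ^ 2 ^ (2 * k)) * a * (a ^ 2 ^ k) - c₂ * (c₁ ^ 2 ^ k) * (c₂ ^ 2 ^ k) * (c₁ ^ 2 ^ (2 * k)) * a * (a ^ 2 ^ k)) * htwo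
      refine ⟨a ^ 2 ^ k * a * (c₁ ^ 2 ^ k * c₄ ^ 2 ^ k + c₂ ^ 2 ^ k * c₃ ^ 2 ^ k), ?_, ?_⟩
      · have hds : c₁ ^ 2 ^ k * c₄ ^ 2 ^ k + c₂ ^ 2 ^ k * c₃ ^ 2 ^ k
            = (c₁ * c₄ + c₂ * c₃) ^ 2 ^ k := by rw [haddq, mul_pow, mul_pow]
        exact mul_ne_zero (mul_ne_zero (pow_ne_zero _ ha) ha)
          (hds ▸ pow_ne_zero _ hdet)
      · intro x y
        have hu : (c₁ * x + c₂ * y) ^ 2 ^ (2 * k)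
            = c₁ ^ 2 ^ (2 * k) * x ^ 2 ^ (2 * k) + c₂ ^ 2 ^ (2 * k) * y ^ 2 ^ (2 * k) := by
          rw [haddQ, mul_pow, mul_pow]
        have hv : (c₃ * x + c₄ * y) ^ 2 ^ (2 * k)
            = c₃ ^ 2 ^ (2 * k) * x ^ 2 ^ (2 * k) + c₄ ^ 2 ^ (2 * k) * y ^ 2 ^ (2 * k) := by
          rw [haddQ, mul_pow, mul_pow]
        simp only [gpoly, pow_succ, hu, hv]
        linear_combination (x ^ 2 ^ (2 * k) * x) * hT1 + (x ^ 2 ^ (2 * k) * y) * hT2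
          + (x * y ^ 2 ^ (2 * k)) * hT3 + (y ^ 2 ^ (2 * k) * y) * hT4
  obtain ⟨a', ha', hg⟩ := hex
  refine ⟨a', ⟨ha', hg⟩, ?_⟩
  rintro b ⟨hb0, hgb⟩
  have hx : c₁ * (c₄ / (c₁ * c₄ + c₂ * c₃)) + c₂ * (c₃ / (c₁ * c₄ + c₂ * c₃)) = 1 := by
    field_simp
  have hy : c₃ * (c₄ / (c₁ * c₄ + c₂ * c₃)) + c₄ * (c₃ / (c₁ * c₄ + c₂ * c₃)) = 0 := by
    have h2 : c₃ * (c₄ / (c₁ * c₄ + c₂ * c₃)) + c₄ * (c₃ / (c₁ * c₄ + c₂ * c₃))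
        = (c₃ * c₄ + c₄ * c₃) / (c₁ * c₄ + c₂ * c₃) := by ring
    rw [h2, div_eq_zero_iff]
    left
    linear_combination (c₃ * c₄) * htwo
  have e0 : (0 : GaloisField 2 m) ^ 2 ^ (2 * k) = 0 := zero_pow hQne
  have e0' : (0 : GaloisField 2 m) ^ (2 ^ (2 * k) + 1) = 0 := zero_pow (by positivity)
  have hg1 : gpoly k α₁ (1 : GaloisField 2 m) 0 = 1 := by
    simp only [gpoly, one_pow, e0, e0', mul_zero, zero_mul, mul_one, add_zero]
  have h1 := hgb (c₄ / (c₁ * c₄ + c₂ * c₃)) (c₃ / (c₁ * c₄ + c₂ * c₃))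
  have h2 := hg (c₄ / (c₁ * c₄ + c₂ * c₃)) (c₃ / (c₁ * c₄ + c₂ * c₃))
  rw [hx, hy, hg1, mul_one] at h1 h2
  exact h1.trans h2.symm
end

section
/- Let K = F_{2^m}, σ(x) = x^{2^k} with gcd(k,m) = 1, and α₁, α₂ ∈ K. Put f_α(x,y) = x^{σ+1} + x y^σ + α y^{σ+1}. If a ∈ K* and c₁, c₂, c₃, c₄ ∈ K with d := c₁c₄ + c₂c₃ ≠ 0 satisfy a · f_{α₁}(c₁x + c₂y, c₃x + c₄y) = f_{α₂}(x,y) for all x, y ∈ K, then d^{σ+1} · a² · α₁ = α₂; in particular, for fixed c₁, c₂, c₃, c₄ (with α₁ ≠ 0) the scalar a is uniquely determined. -/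
/-!
Write `f_α(u) = P(u, u)` for the `σ`-sesquilinear form
`P(u, v) = u₁^σ v₁ + v₁ u₂^σ + α u₂^σ v₂`. Substituting `x u + y v` turns `a f_{α₁}` into
`A x^(σ+1) + B x^σ y + C x y^σ + D y^(σ+1)` with `A = a P(u,u)`, `B = a P(u,v)`,
`C = a P(v,u)`, `D = a P(v,v)`, and, as a Gram determinant, `AD - BC = a² α₁ d^(σ+1)`.
Evaluating at `(1,0)`, `(0,1)`, `(1,1)` and `(x,1)` gives `A = 1`, `D = α₂`, `C = 1 - B` and
`B (x^σ - x) = 0` for all `x`. So either `B = 0`, or `σ` fixes every element of `K`, which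
together with `gcd(k, m) = 1` forces `K = 𝔽₂`; in both cases `B² = B`, i.e. `BC = 0`, and
`α₂ = AD - BC = a² α₁ d^(σ+1)`. Uniqueness of `a` follows since squaring is injective in
characteristic `2`.
-/

open Function

theorem pow_pow_gcd_eq_self {M : Type*} [Monoid M] {p k m : ℕ} {x : M}
    (hk : x ^ p ^ k = x) (hm : x ^ p ^ m = x) : x ^ p ^ k.gcd m = x := by
  have periodic_iff (n : ℕ) : IsPeriodicPt (· ^ p) n x ↔ x ^ p ^ n = x := by
    simp only [IsPeriodicPt, IsFixedPt, pow_iterate]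
  exact (periodic_iff _).1 (((periodic_iff k).2 hk).gcd ((periodic_iff m).2 hm))

theorem GaloisField.pow_pow_eq_self {p n : ℕ} [Fact p.Prime] (hn : n ≠ 0)
    (x : GaloisField p n) : x ^ p ^ n = x := by
  have := Fintype.ofFinite (GaloisField p n)
  rw [← GaloisField.card p n hn, Nat.card_eq_fintype_card]
  exact FiniteField.pow_card x

theorem pow_eq_self_of_forall_mul_pow_pow_sub_eq_zero {K : Type*} [Field K] {p k m : ℕ}
    (hp : p ≠ 0) (hkm : k.gcd m = 1) (hK : ∀ x : K, x ^ p ^ m = x) {b : K}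
    (hb : ∀ x : K, b * (x ^ p ^ k - x) = 0) : b ^ p = b := by
  rcases eq_or_ne b 0 with rfl | hb₀
  · exact zero_pow hp
  · have hfix (x : K) : x ^ p ^ k = x :=
      sub_eq_zero.1 ((mul_eq_zero.1 (hb x)).resolve_left hb₀)
    simpa [hkm] using pow_pow_gcd_eq_self (hfix b) (hK b)

theorem biprojective_coeffs_of_forall_eq {R : Type*} [CommRing R] {q : ℕ} (hq : q ≠ 0) {A B C D α : R}
    (h : ∀ x y : R, A * x ^ (q + 1) + B * x ^ q * y + C * x * y ^ q + D * y ^ (q + 1) =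
      x ^ (q + 1) + x * y ^ q + α * y ^ (q + 1)) :
    A = 1 ∧ D = α ∧ C = 1 - B ∧ ∀ x : R, B * (x ^ q - x) = 0 := by
  have hA : A = 1 := by simpa [zero_pow hq] using h 1 0
  have hD : D = α := by simpa [zero_pow hq] using h 0 1
  have hC : C = 1 - B := by
    have h11 := h 1 1
    simp only [one_pow, mul_one] at h11
    linear_combination h11 - hA - hD
  refine ⟨hA, hD, hC, fun x => ?_⟩
  have hx1 := h x 1
  simp only [one_pow, mul_one] at hx1
  linear_combination hx1 - x ^ (q + 1) * hA - hD - x * hC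

def fpolar {R : Type*} [CommRing R] (k : ℕ) (α : R) (u v : R × R) : R :=
  u.1 ^ 2 ^ k * v.1 + v.1 * u.2 ^ 2 ^ k + α * u.2 ^ 2 ^ k * v.2

section CharTwo

variable {R : Type*} [CommRing R] [CharP R 2] (k : ℕ)

theorem fpolar_add_smul (α x y : R) (u v : R × R) :
    fpolar k α (x • u + y • v) (x • u + y • v) =
      x ^ (2 ^ k + 1) * fpolar k α u u + x ^ 2 ^ k * y * fpolar k α u v +
        x * y ^ 2 ^ k * fpolar k α v u + y ^ (2 ^ k + 1) * fpolar k α v v := by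
  simp only [fpolar, Prod.fst_add, Prod.snd_add, Prod.smul_fst, Prod.smul_snd, smul_eq_mul,
    add_pow_char_pow, mul_pow]
  ring

theorem fpolar_mul_fpolar_sub (α : R) (u v : R × R) :
    fpolar k α u u * fpolar k α v v - fpolar k α u v * fpolar k α v u =
      α * (u.1 * v.2 - v.1 * u.2) ^ (2 ^ k + 1) := by
  rw [pow_succ, sub_pow_char_pow, mul_pow, mul_pow]
  unfold fpolar
  ring

end CharTwo

theorem fpoly_eq_fpolar {m : ℕ} (k : ℕ) (α x y : GaloisField 2 m) :
    fpoly k α x y = fpolar k α (x, y) (x, y) := by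
  unfold fpoly fpolar
  ring

theorem det_pow_mul_sq_mul_eq_of_forall_fpoly_eq {m k : ℕ} (hm : m ≠ 0) (hkm : k.gcd m = 1)
    {α₁ α₂ a c₁ c₂ c₃ c₄ : GaloisField 2 m}
    (hf : ∀ x y : GaloisField 2 m,
      a * fpoly k α₁ (c₁ * x + c₂ * y) (c₃ * x + c₄ * y) = fpoly k α₂ x y) :
    (c₁ * c₄ + c₂ * c₃) ^ (2 ^ k + 1) * a ^ 2 * α₁ = α₂ := by
  set u : GaloisField 2 m × GaloisField 2 m := (c₁, c₃)
  set v : GaloisField 2 m × GaloisField 2 m := (c₂, c₄)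
  have hexp (x y : GaloisField 2 m) :
      a * fpolar k α₁ u u * x ^ (2 ^ k + 1) + a * fpolar k α₁ u v * x ^ 2 ^ k * y +
        a * fpolar k α₁ v u * x * y ^ 2 ^ k + a * fpolar k α₁ v v * y ^ (2 ^ k + 1) =
      x ^ (2 ^ k + 1) + x * y ^ 2 ^ k + α₂ * y ^ (2 ^ k + 1) := by
    have hsubst : (c₁ * x + c₂ * y, c₃ * x + c₄ * y) = x • u + y • v := by
      ext <;> simp [u, v] <;> ring
    have h := hf x y
    rw [fpoly_eq_fpolar k α₁, hsubst, fpolar_add_smul, fpoly] at h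
    linear_combination h
  obtain ⟨hA, hD, hC, hB⟩ := biprojective_coeffs_of_forall_eq (pow_ne_zero k two_ne_zero) hexp
  have hBB := pow_eq_self_of_forall_mul_pow_pow_sub_eq_zero two_ne_zero hkm
    (GaloisField.pow_pow_eq_self hm) hB
  calc (c₁ * c₄ + c₂ * c₃) ^ (2 ^ k + 1) * a ^ 2 * α₁
      = a ^ 2 * (α₁ * (u.1 * v.2 - v.1 * u.2) ^ (2 ^ k + 1)) := by
        rw [CharTwo.sub_eq_add]; ring
    _ = a * fpolar k α₁ u u * (a * fpolar k α₁ v v) -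
          a * fpolar k α₁ u v * (a * fpolar k α₁ v u) := by
        rw [← fpolar_mul_fpolar_sub]; ring
    _ = α₂ := by
        rw [hA, hD, hC]; linear_combination hBB

theorem stmt_5_general (m k : ℕ) (hm : 0 < m) (hkm : Nat.gcd k m = 1)
    (α₁ α₂ : GaloisField 2 m) (a c₁ c₂ c₃ c₄ : GaloisField 2 m)
    (hdet : c₁ * c₄ + c₂ * c₃ ≠ 0)
    (hf : ∀ x y : GaloisField 2 m,
      a * fpoly k α₁ (c₁ * x + c₂ * y) (c₃ * x + c₄ * y) = fpoly k α₂ x y) :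
    (c₁ * c₄ + c₂ * c₃) ^ (2 ^ k + 1) * a ^ 2 * α₁ = α₂ ∧
      (α₁ ≠ 0 → ∀ a' : GaloisField 2 m, a' ≠ 0 →
        (∀ x y : GaloisField 2 m,
          a' * fpoly k α₁ (c₁ * x + c₂ * y) (c₃ * x + c₄ * y) = fpoly k α₂ x y) →
        a' = a) := by
  have hkey := det_pow_mul_sq_mul_eq_of_forall_fpoly_eq hm.ne' hkm hf
  refine ⟨hkey, fun hα₁ a' _ hf' => ?_⟩
  have hkey' := det_pow_mul_sq_mul_eq_of_forall_fpoly_eq hm.ne' hkm hf'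
  have hsq : a' ^ 2 = a ^ 2 :=
    mul_left_cancel₀ (pow_ne_zero _ hdet) (mul_right_cancel₀ hα₁ (hkey'.trans hkey.symm))
  exact frobenius_inj (GaloisField 2 m) 2 hsq

/-- If `(a, M)` moves `f_{α₁}` to `f_{α₂}` and `d = det M`, then
`d^(σ+1) a² α₁ = α₂`; in particular (when `α₁ ≠ 0`) the scalar `a` is uniquely
determined by the matrix entries. -/
theorem stmt_5 (m k : ℕ) (hm : 0 < m) (hk : 0 < k) (hkm : Nat.gcd k m = 1)
    (α₁ α₂ : GaloisField 2 m) (a c₁ c₂ c₃ c₄ : GaloisField 2 m)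
    (ha : a ≠ 0) (hdet : c₁ * c₄ + c₂ * c₃ ≠ 0)
    (hf : ∀ x y : GaloisField 2 m,
      a * fpoly k α₁ (c₁ * x + c₂ * y) (c₃ * x + c₄ * y) = fpoly k α₂ x y) :
    (c₁ * c₄ + c₂ * c₃) ^ (2 ^ k + 1) * a ^ 2 * α₁ = α₂ ∧
      (α₁ ≠ 0 → ∀ a' : GaloisField 2 m, a' ≠ 0 →
        (∀ x y : GaloisField 2 m,
          a' * fpoly k α₁ (c₁ * x + c₂ * y) (c₃ * x + c₄ * y) = fpoly k α₂ x y) →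
        a' = a) :=
  stmt_5_general m k hm hkm α₁ α₂ a c₁ c₂ c₃ c₄ hdet hf
end

section
/- Let K = F_{2^m}, σ(x) = x^{2^k} with gcd(k,m) = 1, and let α₁, α₂ ∈ K be such that X^{σ+1} + X + α_i has no root in K for i = 1, 2, so that F_{α₁,σ} and F_{α₂,σ} are APN. If there exist a ∈ K* and c₁, c₂, c₃, c₄ ∈ K with c₁c₄ + c₂c₃ ≠ 0 such that a · f_{α₁,σ}(c₁x + c₂y, c₃x + c₄y) = f_{α₂,σ}(x,y) for all x, y ∈ K, then F_{α₁,σ} and F_{α₂,σ} are linear equivalent. -/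
/-- The APN function `F_{α,σ} = (f_{α,σ}, g_{α,σ}) : K² → K²`. -/
noncomputable def Fbiproj {m : ℕ} (k : ℕ) (α : GaloisField 2 m)
    (p : GaloisField 2 m × GaloisField 2 m) : GaloisField 2 m × GaloisField 2 m :=
  (fpoly k α p.1 p.2, gpoly k α p.1 p.2)

/-- `F` and `G` are linear equivalent if `L₁ ∘ F ∘ L₂ = G` for some
`𝔽₂`-linear bijections `L₁, L₂`. -/
def LinearEquivalent {V : Type*} [AddCommGroup V] [Module (ZMod 2) V]
    (F G : V → V) : Prop :=
  ∃ L₁ L₂ : V ≃ₗ[ZMod 2] V, ∀ z : V, L₁ (F (L₂ z)) = G z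

/-!
Write `f_{α,σ}(v) = σ(v)ᵀ A_α v` with `A_α = !![1, 0; 1, α]`. Then
`g_{α,σ}(v) = σ²(v)ᵀ B_α v` with `B_α = A_α^σ J A_α` and `J = !![0, 1; -1, 0]`.
If `σ ≠ id` on `K`, a form `σ(v)ᵀ A v` on `K²` determines `A`, so the hypothesis reads
`A_{α₂} = a • (M^σ)ᵀ A_{α₁} M`. Since `N J Nᵀ = det N • J`, this gives
`B_{α₂} = a^σ a det(M)^σ • (M^{σ²})ᵀ B_{α₁} M`, i.e. `g_{α₂} = a^{σ+1} det(M)^σ · g_{α₁} ∘ M`.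
If `σ = id` on `K`, then `g_{α,σ} = f_{α,σ}`. Either way `F_{α₂,σ}` is `F_{α₁,σ} ∘ M` followed by
a diagonal scaling.
-/

open Matrix

section TwistedForm

variable {R : Type*} [CommRing R] {n : Type*} [Fintype n]

def twistedForm (σ : R →+* R) (A : Matrix n n R) (v : n → R) : R :=
  (σ ∘ v) ⬝ᵥ (A *ᵥ v)

variable (σ : R →+* R)

lemma twistedForm_smul (c : R) (A : Matrix n n R) (v : n → R) :
    twistedForm σ (c • A) v = c * twistedForm σ A v := by
  simp only [twistedForm, smul_mulVec, dotProduct_smul, smul_eq_mul]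

lemma twistedForm_mulVec (A M : Matrix n n R) (v : n → R) :
    twistedForm σ A (M *ᵥ v) = twistedForm σ ((M.map σ)ᵀ * A * M) v := by
  have hσv : σ ∘ (M *ᵥ v) = M.map σ *ᵥ (σ ∘ v) := funext (RingHom.map_mulVec σ M v)
  rw [twistedForm, twistedForm, hσv, dotProduct_comm, dotProduct_mulVec, ← mulVec_transpose,
    dotProduct_comm]
  simp only [mulVec_mulVec, Matrix.mul_assoc]

lemma twistedForm_fin_two (A : Matrix (Fin 2) (Fin 2) R) (v : Fin 2 → R) :
    twistedForm σ A v =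
      σ (v 0) * (A 0 0 * v 0 + A 0 1 * v 1) + σ (v 1) * (A 1 0 * v 0 + A 1 1 * v 1) := by
  simp [twistedForm, dotProduct, mulVec, Fin.sum_univ_two]

end TwistedForm

section FinTwo

variable {R : Type*} [CommRing R]

lemma mul_symplectic_mul_transpose (M : Matrix (Fin 2) (Fin 2) R) :
    M * !![0, 1; -1, 0] * Mᵀ = M.det • !![0, 1; -1, 0] := by
  ext i j
  fin_cases i <;> fin_cases j <;> simp [det_fin_two, Matrix.mul_apply, Fin.sum_univ_two] <;> ring

def secondForm (σ : R →+* R) (A : Matrix (Fin 2) (Fin 2) R) : Matrix (Fin 2) (Fin 2) R :=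
  A.map σ * !![0, 1; -1, 0] * A

lemma secondForm_smul_conj (σ : R →+* R) (a : R) (A M : Matrix (Fin 2) (Fin 2) R) :
    secondForm σ (a • ((M.map σ)ᵀ * A * M)) =
      (σ a * a * σ M.det) • (((M.map σ).map σ)ᵀ * secondForm σ A * M) := by
  have hmap : (a • ((M.map σ)ᵀ * A * M)).map σ =
      σ a • (((M.map σ).map σ)ᵀ * A.map σ * M.map σ) := by
    simp [Matrix.map_mul, transpose_map, Matrix.map_smul']
  have hJ : M.map σ * !![0, 1; -1, 0] * (M.map σ)ᵀ = σ M.det • !![0, 1; -1, 0] := by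
    rw [mul_symplectic_mul_transpose, RingHom.map_det, RingHom.mapMatrix_apply]
  calc secondForm σ (a • ((M.map σ)ᵀ * A * M))
      = (σ a * a) • (((M.map σ).map σ)ᵀ * A.map σ *
          (M.map σ * !![0, 1; -1, 0] * (M.map σ)ᵀ) * A * M) := by
        rw [secondForm, hmap]
        simp only [Matrix.smul_mul, Matrix.mul_smul, smul_smul, Matrix.mul_assoc, mul_comm a]
    _ = (σ a * a * σ M.det) • (((M.map σ).map σ)ᵀ * secondForm σ A * M) := by
        simp only [hJ, secondForm, Matrix.smul_mul, Matrix.mul_smul, smul_smul, Matrix.mul_assoc]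

end FinTwo

lemma twistedForm_injective {K : Type*} [Field K] {σ : K →+* K} (hσ : ∃ y, σ y ≠ y) :
    Function.Injective (twistedForm σ (n := Fin 2)) := by
  obtain ⟨y₀, hy₀⟩ := hσ
  intro A B hAB
  have h : ∀ x y, twistedForm σ A ![x, y] = twistedForm σ B ![x, y] := fun x y => congrFun hAB _
  simp only [twistedForm_fin_two, Matrix.cons_val_zero, Matrix.cons_val_one] at h
  have h10 := h 1 0
  have h01 := h 0 1
  have h11 := h 1 1
  have hy := h y₀ 1
  simp only [map_one, map_zero, zero_mul, mul_zero, one_mul, mul_one, add_zero, zero_add]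
    at h10 h01 h11 hy
  have hsum : A 0 1 + A 1 0 = B 0 1 + B 1 0 := by linear_combination h11 - h10 - h01
  have hA10 : A 1 0 = B 1 0 := by
    have : (A 1 0 - B 1 0) * (y₀ - σ y₀) = 0 := by
      linear_combination hy - σ y₀ * hsum - (σ y₀ * y₀) * h10 - h01
    exact sub_eq_zero.mp ((mul_eq_zero.mp this).resolve_right (sub_ne_zero.mpr hy₀.symm))
  ext i j
  fin_cases i <;> fin_cases j
  · exact h10
  · exact (by linear_combination hsum - hA10 : A 0 1 = B 0 1)
  · exact hA10
  · exact h01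

lemma linearEquivalent_of_mulVec {K : Type*} [Field K] [Algebra (ZMod 2) K]
    {f₁ g₁ f₂ g₂ : K → K → K} {a b : K} {M : Matrix (Fin 2) (Fin 2) K}
    (ha : a ≠ 0) (hb : b ≠ 0) (hM : M.det ≠ 0)
    (hf : ∀ v, a * f₁ ((M *ᵥ v) 0) ((M *ᵥ v) 1) = f₂ (v 0) (v 1))
    (hg : ∀ v, b * g₁ ((M *ᵥ v) 0) ((M *ᵥ v) 1) = g₂ (v 0) (v 1)) :
    LinearEquivalent (fun p : K × K => (f₁ p.1 p.2, g₁ p.1 p.2))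
      (fun p => (f₂ p.1 p.2, g₂ p.1 p.2)) := by
  have := M.invertibleOfIsUnitDet (isUnit_iff_ne_zero.mpr hM)
  let L₁ : (K × K) ≃ₗ[K] K × K :=
    (LinearEquiv.smulOfNeZero K K a ha).prodCongr (LinearEquiv.smulOfNeZero K K b hb)
  let L₂ : (K × K) ≃ₗ[K] K × K :=
    (LinearEquiv.finTwoArrow K K).symm ≪≫ₗ M.toLinearEquiv' ‹_› ≪≫ₗ LinearEquiv.finTwoArrow K K
  refine ⟨L₁.restrictScalars (ZMod 2), L₂.restrictScalars (ZMod 2), fun z => ?_⟩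
  simpa [L₁, L₂, Matrix.toLinearEquiv'_apply] using ⟨hf ![z.1, z.2], hg ![z.1, z.2]⟩

section Biprojective

variable {m : ℕ} (k : ℕ)

local notation "K" => GaloisField 2 m

noncomputable def fpolyMatrix (α : K) : Matrix (Fin 2) (Fin 2) K := !![1, 0; 1, α]

lemma fpoly_eq_twistedForm (α : K) (v : Fin 2 → K) :
    fpoly k α (v 0) (v 1) = twistedForm (iterateFrobenius K 2 k) (fpolyMatrix α) v := by
  simp [twistedForm_fin_two, fpolyMatrix, fpoly, iterateFrobenius_def]
  ring

lemma gpoly_eq_twistedForm (α : K) (v : Fin 2 → K) :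
    gpoly k α (v 0) (v 1) =
      twistedForm ((iterateFrobenius K 2 k).comp (iterateFrobenius K 2 k))
        (secondForm (iterateFrobenius K 2 k) (fpolyMatrix α)) v := by
  have h2k : 2 ^ (2 * k) = 2 ^ k * 2 ^ k := by rw [two_mul, pow_add]
  simp [twistedForm_fin_two, secondForm, fpolyMatrix, gpoly, iterateFrobenius_def, h2k, pow_mul,
    Matrix.mul_apply, Fin.sum_univ_two, CharTwo.neg_eq]
  ring

lemma gpoly_eq_fpoly_of_pow_eq_self (h : ∀ y : K, y ^ 2 ^ k = y) (α x y : K) :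
    gpoly k α x y = fpoly k α x y := by
  have h2 : ∀ y : K, y ^ 2 ^ (2 * k) = y := fun y => by rw [two_mul, pow_add, pow_mul, h, h]
  simp only [gpoly, fpoly, pow_succ, h, h2]
  linear_combination (α * x * y) * CharTwo.two_eq_zero (R := K)

lemma gpoly_mulVec_of_fpoly_mulVec {α₁ α₂ a : K} {M : Matrix (Fin 2) (Fin 2) K}
    (hσ : ∃ y : K, y ^ 2 ^ k ≠ y)
    (hf : ∀ v, a * fpoly k α₁ ((M *ᵥ v) 0) ((M *ᵥ v) 1) = fpoly k α₂ (v 0) (v 1))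
    (v : Fin 2 → K) :
    a ^ 2 ^ k * a * M.det ^ 2 ^ k * gpoly k α₁ ((M *ᵥ v) 0) ((M *ᵥ v) 1) =
      gpoly k α₂ (v 0) (v 1) := by
  set σ := iterateFrobenius K 2 k
  have hA : a • ((M.map σ)ᵀ * fpolyMatrix α₁ * M) = fpolyMatrix α₂ :=
    twistedForm_injective hσ <| funext fun w => by
      rw [twistedForm_smul, ← twistedForm_mulVec, ← fpoly_eq_twistedForm,
        ← fpoly_eq_twistedForm, hf]
  rw [gpoly_eq_twistedForm, gpoly_eq_twistedForm, ← hA, secondForm_smul_conj, twistedForm_smul,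
    twistedForm_mulVec, Matrix.map_map]
  rfl

end Biprojective

theorem stmt_6_general (m k : ℕ) (α₁ α₂ : GaloisField 2 m)
    (hmove : ∃ a c₁ c₂ c₃ c₄ : GaloisField 2 m, a ≠ 0 ∧ c₁ * c₄ + c₂ * c₃ ≠ 0 ∧
      ∀ x y : GaloisField 2 m,
        a * fpoly k α₁ (c₁ * x + c₂ * y) (c₃ * x + c₄ * y) = fpoly k α₂ x y) :
    LinearEquivalent (Fbiproj k α₁) (Fbiproj k α₂) := by
  obtain ⟨a, c₁, c₂, c₃, c₄, ha, hdet, hf⟩ := hmove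
  set M : Matrix (Fin 2) (Fin 2) (GaloisField 2 m) := !![c₁, c₂; c₃, c₄]
  have hM : M.det ≠ 0 := by rwa [det_fin_two_of, CharTwo.sub_eq_add]
  have hfM (v : Fin 2 → GaloisField 2 m) :
      a * fpoly k α₁ ((M *ᵥ v) 0) ((M *ᵥ v) 1) = fpoly k α₂ (v 0) (v 1) := by
    simpa [M, vecHead, vecTail] using hf (v 0) (v 1)
  by_cases hσ : ∀ y : GaloisField 2 m, y ^ 2 ^ k = y
  · exact linearEquivalent_of_mulVec ha ha hM hfM
      (by simpa only [gpoly_eq_fpoly_of_pow_eq_self k hσ] using hfM)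
  · exact linearEquivalent_of_mulVec ha (mul_ne_zero (mul_ne_zero (pow_ne_zero _ ha) ha)
      (pow_ne_zero _ hM)) hM hfM (gpoly_mulVec_of_fpoly_mulVec k (not_forall.mp hσ) hfM)

/-- If some `(a, M)` moves `f_{α₁,σ}` to `f_{α₂,σ}`, then `F_{α₁,σ}` and
`F_{α₂,σ}` are linear equivalent. -/
theorem stmt_6 (m k : ℕ) (hm : 0 < m) (hk : 0 < k) (hkm : Nat.gcd k m = 1)
    (α₁ α₂ : GaloisField 2 m)
    (hα₁ : ∀ x : GaloisField 2 m, x ^ (2 ^ k + 1) + x + α₁ ≠ 0)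
    (hα₂ : ∀ x : GaloisField 2 m, x ^ (2 ^ k + 1) + x + α₂ ≠ 0)
    (hmove : ∃ a c₁ c₂ c₃ c₄ : GaloisField 2 m, a ≠ 0 ∧ c₁ * c₄ + c₂ * c₃ ≠ 0 ∧
      ∀ x y : GaloisField 2 m,
        a * fpoly k α₁ (c₁ * x + c₂ * y) (c₃ * x + c₄ * y) = fpoly k α₂ x y) :
    LinearEquivalent (Fbiproj k α₁) (Fbiproj k α₂) :=
  stmt_6_general m k α₁ α₂ hmove
end

section
/- Let K = F_{2^m}, let σ(x) = x^{2^k} with gcd(k,m) = 1, and let σ̄(x) = x^{2^{m−k}} be the inverse automorphism. Let α ∈ K be such that X^{σ+1} + X + α has no root in K. Then F_{α,σ} and F_{α^{σ̄},σ̄} are linear equivalent, where α^{σ̄} = α^{2^{m−k}}. -/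
section TwistedPolynomials

variable {R : Type*} [CommRing R]

/-- The paper's `f_{β,τ}` (and, below, `g_{β,τ}`) for an arbitrary ring endomorphism `τ`;
`fpoly k` and `gpoly k` are the case `τ = (· ^ 2 ^ k)`. -/
def fpolyHom (τ : R →+* R) (β x y : R) : R :=
  τ x * x + x * τ y + β * τ y * y

def gpolyHom (τ : R →+* R) (β x y : R) : R :=
  τ (τ x) * x + β * τ (τ x) * y + (1 + τ β) * x * τ (τ y) + β * τ (τ y) * y

variable [CharP R 2] {σ τ : R →+* R}

theorem map_fpolyHom_shear (hτσ : ∀ x, τ (σ x) = x) (β x y : R) :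
    τ (fpolyHom σ β (x + y) y) = fpolyHom τ (τ β) x y := by
  simp only [fpolyHom, map_add, map_mul, hτσ]
  linear_combination (y * τ x + y * τ y) * CharTwo.two_eq_zero (R := R)

theorem map_map_gpolyHom_shear (hτσ : ∀ x, τ (σ x) = x) (β x y : R) :
    τ (τ (gpolyHom σ β (x + y) y)) = gpolyHom τ (τ β) x y := by
  simp only [gpolyHom, map_add, map_mul, map_one, hτσ]
  linear_combination
    (y * τ (τ x) + y * τ (τ y) + τ (τ β) * y * τ (τ y)) * CharTwo.two_eq_zero (R := R)

end TwistedPolynomials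

def shearEquiv (R M : Type*) [Ring R] [AddCommGroup M] [Module R M] : (M × M) ≃ₗ[R] M × M where
  toFun p := (p.1 + p.2, p.2)
  invFun p := (p.1 - p.2, p.2)
  left_inv p := by simp
  right_inv p := by simp
  map_add' p q := by simp [add_add_add_comm]
  map_smul' c p := by simp [smul_add]

noncomputable def iterateFrobeniusLinearEquiv (R : Type*) [CommRing R] (p : ℕ) [Fact p.Prime]
    [CharP R p] [PerfectRing R p] [Module (ZMod p) R] (n : ℕ) : R ≃ₗ[ZMod p] R :=
  (iterateFrobeniusEquiv R p n).toAddEquiv.toLinearEquiv (ZMod.map_smul _)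

namespace GaloisField

variable {p : ℕ} [Fact p.Prime] {m : ℕ}

theorem pow_char_pow_self (x : GaloisField p m) : x ^ p ^ m = x := by
  rcases eq_or_ne m 0 with rfl | hm
  · rw [pow_zero, pow_one]
  · have : Fintype (GaloisField p m) := Fintype.ofFinite _
    rw [← GaloisField.card p m hm, Nat.card_eq_fintype_card, FiniteField.pow_card]

theorem iterateFrobenius_sub_apply {k : ℕ} (hkm : k ≤ m) (x : GaloisField p m) :
    iterateFrobenius _ p (m - k) (iterateFrobenius _ p k x) = x := by
  rw [← iterateFrobenius_add_apply, Nat.sub_add_cancel hkm, iterateFrobenius_def,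
    pow_char_pow_self]

end GaloisField

theorem fpoly_eq_fpolyHom {m : ℕ} (k : ℕ) (α x y : GaloisField 2 m) :
    fpoly k α x y = fpolyHom (iterateFrobenius _ 2 k) α x y := by
  simp only [fpoly, fpolyHom, iterateFrobenius_def]
  ring

theorem gpoly_eq_gpolyHom {m : ℕ} (k : ℕ) (α x y : GaloisField 2 m) :
    gpoly k α x y = gpolyHom (iterateFrobenius _ 2 k) α x y := by
  simp only [gpoly, gpolyHom, iterateFrobenius_def, ← pow_mul, two_mul, pow_add]
  ring

theorem stmt_10_general (m k : ℕ) (hkm' : k < m)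
    (α : GaloisField 2 m) :
    LinearEquivalent (Fbiproj k α) (Fbiproj (m - k) (α ^ (2 ^ (m - k)))) := by
  set τ := iterateFrobeniusLinearEquiv (GaloisField 2 m) 2 (m - k)
  have hτσ := GaloisField.iterateFrobenius_sub_apply (p := 2) hkm'.le
  refine ⟨τ.prodCongr (τ.trans τ), shearEquiv _ _, fun ⟨x, y⟩ => ?_⟩
  ext
  · change τ (fpoly k α (x + y) y) = fpoly (m - k) (τ α) x y
    rw [fpoly_eq_fpolyHom, fpoly_eq_fpolyHom]
    exact map_fpolyHom_shear hτσ α x y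
  · change τ (τ (gpoly k α (x + y) y)) = gpoly (m - k) (τ α) x y
    rw [gpoly_eq_gpolyHom, gpoly_eq_gpolyHom]
    exact map_map_gpolyHom_shear hτσ α x y

/-- With `σ̄ : x ↦ x^(2^(m-k))` the inverse automorphism of `σ : x ↦ x^(2^k)`,
the functions `F_{α,σ}` and `F_{α^σ̄, σ̄}` are linear equivalent. -/
theorem stmt_10 (m k : ℕ) (hk : 0 < k) (hkm' : k < m) (hkm : Nat.gcd k m = 1)
    (α : GaloisField 2 m)
    (hα : ∀ x : GaloisField 2 m, x ^ (2 ^ k + 1) + x + α ≠ 0) :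
    LinearEquivalent (Fbiproj k α) (Fbiproj (m - k) (α ^ (2 ^ (m - k)))) :=
  stmt_10_general m k hkm' α
end

section
/- Let K = F_{2^m}, let σ(x) = x^{2^k} with gcd(k,m) = 1, let σ̄(x) = x^{2^{m−k}} be its inverse, and let α ∈ K. Then the polynomial X^{σ+1} + X + α has no root in K if and only if the polynomial X^{σ̄+1} + X + α^σ has no root in K, i.e., X^{2^k+1} + X + α has no root in F_{2^m} if and only if X^{2^{m−k}+1} + X + α^{2^k} has no root in F_{2^m}. -/
lemma gf_pow_card (m : ℕ) (hm0 : 0 < m) (t : GaloisField 2 m) : t ^ (2 ^ m) = t := by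
  have : Fintype (GaloisField 2 m) := Fintype.ofFinite _
  have hc : Fintype.card (GaloisField 2 m) = 2 ^ m := by
    rw [← Nat.card_eq_fintype_card, GaloisField.card 2 m (by omega)]
  rw [← hc, FiniteField.pow_card]

lemma gf_aux (m a b : ℕ) (hm : a + b = m) (hm0 : 0 < m) (β x : GaloisField 2 m)
    (hx : x ^ (2 ^ a + 1) + x + β = 0) :
    ((x ^ (2 ^ a)) ^ (2 ^ a) + 1) ^ (2 ^ b + 1) + ((x ^ (2 ^ a)) ^ (2 ^ a) + 1)
      + β ^ (2 ^ a) = 0 := by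
  have htwo : (2 : GaloisField 2 m) = 0 := by
    exact_mod_cast CharP.cast_eq_zero (GaloisField 2 m) 2
  have frob : ∀ (u v : GaloisField 2 m) (n : ℕ),
      (u + v) ^ (2 ^ n) = u ^ (2 ^ n) + v ^ (2 ^ n) := fun u v n =>
    add_pow_char_pow u v 2 n
  have hx2 : (x ^ (2 ^ a)) ^ (2 ^ a) * x ^ (2 ^ a) + x ^ (2 ^ a) + β ^ (2 ^ a) = 0 := by
    have h : (x ^ (2 ^ a + 1) + x + β) ^ (2 ^ a) = 0 := by
      rw [hx]; exact zero_pow (by positivity)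
    rw [frob, frob, pow_succ, mul_pow] at h
    exact h
  have hB : ((x ^ (2 ^ a)) ^ (2 ^ a)) ^ (2 ^ b) = x ^ (2 ^ a) := by
    rw [← pow_mul, ← pow_mul]
    have he : 2 ^ a * (2 ^ a * 2 ^ b) = 2 ^ m * 2 ^ a := by
      rw [← pow_add, hm, mul_comm]
    rw [he, pow_mul, gf_pow_card m hm0]
  rw [pow_succ, frob, one_pow, hB]
  linear_combination hx2 + ((x ^ (2 ^ a)) ^ (2 ^ a) + 1) * htwo

/-- `X^(σ+1) + X + α` has no root in `𝔽_{2^m}` iff `X^(σ̄+1) + X + α^σ` has no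
root in `𝔽_{2^m}`, where `σ : x ↦ x^(2^k)` and `σ̄ : x ↦ x^(2^(m-k))` is its
inverse automorphism. -/
theorem stmt_11 (m k : ℕ) (hk : 0 < k) (hkm' : k < m) (hkm : Nat.gcd k m = 1)
    (α : GaloisField 2 m) :
    (∀ x : GaloisField 2 m, x ^ (2 ^ k + 1) + x + α ≠ 0) ↔
      (∀ x : GaloisField 2 m, x ^ (2 ^ (m - k) + 1) + x + α ^ (2 ^ k) ≠ 0) := by
  have hm0 : 0 < m := by omega
  constructor
  · intro h y hy
    have hres := gf_aux m (m - k) k (by omega) hm0 (α ^ (2 ^ k)) y hy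
    have hα : (α ^ (2 ^ k)) ^ (2 ^ (m - k)) = α := by
      rw [← pow_mul, ← pow_add, Nat.add_sub_cancel' hkm'.le, gf_pow_card m hm0]
    rw [hα] at hres
    exact h _ hres
  · intro h x hx
    exact h _ (gf_aux m k (m - k) (by omega) hm0 α x hx)
end

section
/- Let n be even and let F : F_{2^n} → F_{2^n} be a quadratic APN function with F(0) = 0 such that every y in the image of F with y ≠ 0 has at least 3 preimages under F. Then F(x) = 0 if and only if x = 0, and every y ≠ 0 in the image of F has precisely 3 preimages, i.e., F is 3-to-1. -/
/-- `F` is quadratic if every discrete derivative `x ↦ F (x + a) + F x` is an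
`𝔽₂`-affine map. -/
def IsQuadratic {V : Type*} [AddCommGroup V] [Module (ZMod 2) V] (F : V → V) : Prop :=
  ∀ a : V, ∃ (L : V →ₗ[ZMod 2] V) (c : V), ∀ x : V, F (x + a) + F x = L x + c

/-!
Count the pairs `(x, a)` with `F (x + a) = F x` in two ways. Summing over `a`, the shift
`a = 0` contributes `2^n` pairs and, by the APN property, every `a ≠ 0` at most `2`. Summing
over `x` gives `∑ m(y)²`, where `m(y)` is the size of the fibre over `y`. Since `m(y) ≥ 3` for
`y ≠ 0`, this forces `(m(0) - 1)(m(0) - 2) ≤ 0` and `m(y) = 3` for every nonzero value `y`.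
Hence `3 ∣ 2^n - m(0)`, and `2^n ≡ 1 (mod 3)` for even `n` leaves only `m(0) = 1`.
-/

open Finset

section Fibers

variable {V W : Type*} [Fintype V] [DecidableEq W]

theorem sum_card_fiber_eq_card_fiber_mul_self_add (F : V → W) (z : W) :
    ∑ x, #{y | F y = F x} =
      #{x | F x = z} * #{x | F x = z} + ∑ x with F x ≠ z, #{y | F y = F x} := by
  rw [← sum_filter_add_sum_filter_not univ (fun x => F x = z)]
  congr 1
  rw [sum_congr rfl fun x hx => by rw [(mem_filter.1 hx).2], sum_const, smul_eq_mul]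

theorem dvd_card_filter_ne_of_card_fiber_eq {F : V → W} {z : W} {k : ℕ}
    (h : ∀ x, F x ≠ z → #{y | F y = F x} = k) : k ∣ #{x | F x ≠ z} := by
  rw [card_eq_sum_card_image F]
  refine dvd_sum fun w hw => ?_
  obtain ⟨x, hx, rfl⟩ := mem_image.1 hw
  have hxz : F x ≠ z := (mem_filter.1 hx).2
  rw [filter_filter, filter_congr fun y _ => and_iff_right_of_imp fun hy => hy ▸ hxz, h x hxz]

theorem card_fiber_mem_Icc_and_card_fiber_eq_three {F : V → W} {z : W}
    (h3 : ∀ x, F x ≠ z → 3 ≤ #{y | F y = F x})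
    (hsum : ∑ x, #{y | F y = F x} + 2 ≤ 3 * Fintype.card V) :
    #{x | F x = z} ∈ Set.Icc 1 2 ∧ ∀ x, F x ≠ z → #{y | F y = F x} = 3 := by
  have hle : ∀ x ∈ ({x | F x ≠ z} : Finset V), 3 ≤ #{y | F y = F x} :=
    fun x hx => h3 x (mem_filter.1 hx).2
  have hsplit := sum_card_fiber_eq_card_fiber_mul_self_add F z
  have hcard : #{x | F x = z} + #{x | F x ≠ z} = Fintype.card V :=
    card_filter_add_card_filter_not _
  have hlow : #{x | F x ≠ z} • 3 ≤ ∑ x with F x ≠ z, #{y | F y = F x} :=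
    card_nsmul_le_sum _ _ _ hle
  rw [smul_eq_mul] at hlow
  set m := #{x | F x = z}
  have hm : m ∈ Set.Icc 1 2 := by
    constructor <;> nlinarith
  have hup : ∑ x with F x ≠ z, #{y | F y = F x} ≤ ∑ x with F x ≠ z, 3 := by
    obtain ⟨h1, h2⟩ := hm
    rw [sum_const, smul_eq_mul]
    interval_cases m <;> omega
  have heq := (sum_eq_sum_iff_of_le hle).1 (le_antisymm (sum_le_sum hle) hup)
  exact ⟨hm, fun x hx => (heq x (by simpa using hx)).symm⟩

theorem card_fiber_eq_one_and_card_fiber_eq_three {F : V → W} {z : W}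
    (hV : Fintype.card V % 3 = 1) (h3 : ∀ x, F x ≠ z → 3 ≤ #{y | F y = F x})
    (hsum : ∑ x, #{y | F y = F x} + 2 ≤ 3 * Fintype.card V) :
    #{x | F x = z} = 1 ∧ ∀ x, F x ≠ z → #{y | F y = F x} = 3 := by
  obtain ⟨⟨h1, h2⟩, hfib⟩ := card_fiber_mem_Icc_and_card_fiber_eq_three h3 hsum
  have hdvd := dvd_card_filter_ne_of_card_fiber_eq hfib
  have hcard : #{x | F x = z} + #{x | F x ≠ z} = Fintype.card V :=
    card_filter_add_card_filter_not _
  exact ⟨by omega, hfib⟩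

end Fibers

section Collisions

variable {V W : Type*} [AddGroup V] [Fintype V] [DecidableEq W]

theorem sum_card_collisions_eq_sum_card_fiber (F : V → W) :
    ∑ a, #{x | F (x + a) = F x} = ∑ x, #{y | F y = F x} := by
  simp_rw [card_filter]
  rw [sum_comm]
  exact sum_congr rfl fun x _ =>
    Equiv.sum_comp (Equiv.addLeft x) fun y => if F y = F x then 1 else 0

theorem sum_card_fiber_add_two_le [DecidableEq V] {F : V → W}
    (hF : ∀ a ≠ 0, #{x | F (x + a) = F x} ≤ 2) :
    ∑ x, #{y | F y = F x} + 2 ≤ 3 * Fintype.card V := by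
  rw [← sum_card_collisions_eq_sum_card_fiber, ← add_sum_erase _ _ (mem_univ 0)]
  have hcard : #(univ.erase (0 : V)) + 1 = Fintype.card V := card_erase_add_one (mem_univ 0)
  have hsum : ∑ a ∈ univ.erase 0, #{x | F (x + a) = F x} ≤ #(univ.erase (0 : V)) * 2 :=
    sum_le_card_nsmul _ _ _ fun a ha => hF a (ne_of_mem_erase ha)
  simp only [add_zero, filter_true, card_univ]
  omega

end Collisions

theorem IsAPN.card_collisions_le_two {V : Type*} [AddCommGroup V] [Module (ZMod 2) V]
    [Fintype V] [DecidableEq V] {F : V → V} (hF : IsAPN F) {a : V} (ha : a ≠ 0) :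
    #{x | F (x + a) = F x} ≤ 2 := by
  have h := hF a ha 0
  simp_rw [add_eq_zero_iff_eq_neg, ZModModule.neg_eq_self, Set.ncard_eq_toFinset_card',
    Set.toFinset_ofPred] at h
  exact h

theorem GaloisField.card_mod_three {n : ℕ} (hn : n ≠ 0) (he : Even n) :
    Nat.card (GaloisField 2 n) % 3 = 1 := by
  obtain ⟨k, rfl⟩ := he
  rw [GaloisField.card 2 _ hn, ← two_mul, pow_mul, Nat.pow_mod]
  norm_num

theorem stmt_16_general (n : ℕ) (hn : 0 < n) (hne : Even n)
    (F : GaloisField 2 n → GaloisField 2 n)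
    (hF : IsAPN F) (hF0 : F 0 = 0)
    (h3 : ∀ y ∈ Set.range F, y ≠ 0 → 3 ≤ Set.ncard {x : GaloisField 2 n | F x = y}) :
    (∀ x : GaloisField 2 n, F x = 0 ↔ x = 0) ∧
      (∀ y ∈ Set.range F, y ≠ 0 → Set.ncard {x : GaloisField 2 n | F x = y} = 3) := by
  classical
  let := Fintype.ofFinite (GaloisField 2 n)
  have hncard (y : GaloisField 2 n) : Set.ncard {x | F x = y} = #{x | F x = y} := by
    simp [Set.ncard_eq_toFinset_card']
  obtain ⟨hker, hfib⟩ := card_fiber_eq_one_and_card_fiber_eq_three (z := 0)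
    (Fintype.card_eq_nat_card (α := GaloisField 2 n) ▸ GaloisField.card_mod_three hn.ne' hne)
    (fun x hx => hncard (F x) ▸ h3 (F x) ⟨x, rfl⟩ hx)
    (sum_card_fiber_add_two_le fun a ha => hF.card_collisions_le_two ha)
  refine ⟨fun x => ⟨fun hx => card_le_one.1 hker.le x ?_ 0 ?_, fun hx => hx ▸ hF0⟩, ?_⟩
  · simpa using hx
  · simpa using hF0
  · rintro y ⟨x, rfl⟩ hy
    rw [hncard]
    exact hfib x hy

/-- If `n` is even and `F : 𝔽_{2^n} → 𝔽_{2^n}` is a quadratic APN function with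
`F 0 = 0` such that every nonzero value of `F` has at least `3` preimages, then
`F x = 0` iff `x = 0`, and every nonzero value has exactly `3` preimages,
i.e. `F` is `3`-to-`1`. -/
theorem stmt_16 (n : ℕ) (hn : 0 < n) (hne : Even n)
    (F : GaloisField 2 n → GaloisField 2 n)
    (hF : IsAPN F) (hFq : IsQuadratic F) (hF0 : F 0 = 0)
    (h3 : ∀ y ∈ Set.range F, y ≠ 0 → 3 ≤ Set.ncard {x : GaloisField 2 n | F x = y}) :
    (∀ x : GaloisField 2 n, F x = 0 ↔ x = 0) ∧
      (∀ y ∈ Set.range F, y ≠ 0 → Set.ncard {x : GaloisField 2 n | F x = y} = 3) :=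
  stmt_16_general n hn hne F hF hF0 h3
end
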